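/- arXiv:1808.05791 — 3 statements merged into one kernel-verified Lean document; each statement's English description precedes it below -/
import Mathlib

section
/- Every multi-dimension bounded-energy Muller game has a finite-memory SPE. -/
/-! Common framework: arenas, strategies, plays, winning, finite memory, (h)SPE. -/

structure Arena (V C : Type) where
  V1 : Set V
  V2 : Set V
  E : Set (V × V)
  Γ : V → C

namespace Arena

variable {V C : Type}

/-- The vertex set of an arena. -/
def vertices (O : Arena V C) : Set V := O.V1 ∪ O.V2

/-- Well-formedness of an arena: the two players' vertex sets are disjoint, edges stay
within the vertex set, and every vertex has at least one outgoing edge. -/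
def WF (O : Arena V C) : Prop :=
  Disjoint O.V1 O.V2 ∧ (∀ e ∈ O.E, e.1 ∈ O.vertices ∧ e.2 ∈ O.vertices) ∧
    ∀ v ∈ O.vertices, ∃ u, (v, u) ∈ O.E

/-- Restriction of an arena to a subset `S` of the vertices. -/
def restrict (O : Arena V C) (S : Set V) : Arena V C :=
  ⟨O.V1 ∩ S, O.V2 ∩ S, O.E ∩ S ×ˢ S, O.Γ⟩

/-- Product of an arena with a DFA over the colors. -/
def prodDFA {Q : Type} (O : Arena V C) (A : DFA C Q) : Arena (V × Q) C :=
  ⟨O.V1 ×ˢ (Set.univ : Set Q), O.V2 ×ˢ (Set.univ : Set Q),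
    {p : (V × Q) × V × Q | (p.1.1, p.2.1) ∈ O.E ∧ p.2.2 = A.step p.1.2 (O.Γ p.1.1)},
    fun vq => O.Γ vq.1⟩

/-- A strategy (for Player 1) is valid if it follows edges on Player 1's vertices. -/
def Valid1 (O : Arena V C) (σ : List C → V → V) : Prop :=
  ∀ (w : List C), ∀ v ∈ O.V1, (v, σ w v) ∈ O.E

/-- A strategy (for Player 2) is valid if it follows edges on Player 2's vertices. -/
def Valid2 (O : Arena V C) (σ : List C → V → V) : Prop :=
  ∀ (w : List C), ∀ v ∈ O.V2, (v, σ w v) ∈ O.E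

open Classical in
/-- The combination σ₁ ∪ σ₂ of a strategy profile into one function. -/
noncomputable def combine (O : Arena V C) (σ1 σ2 : List C → V → V) : List C → V → V :=
  fun w v => if v ∈ O.V1 then σ1 w v else σ2 w v

/-- The sequence of (history, current vertex) pairs generated by a profile from `(w, v)`. -/
def stepSeq (O : Arena V C) (σ : List C → V → V) (w : List C) (v : V) : ℕ → List C × V
  | 0 => (w, v)
  | k + 1 =>
    let p := stepSeq O σ w v k
    (p.1 ++ [O.Γ p.2], σ p.1 p.2)

/-- The play `Σ_σ(w, v)` induced by a (combined) strategy profile `σ` from `(w, v)`: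
its first `|w|` letters are `w`, then it continues with the colors of the visited vertices. -/
def play (O : Arena V C) (σ : List C → V → V) (w : List C) (v : V) : ℕ → C :=
  fun i => if h : i < w.length then w.get ⟨i, h⟩
    else O.Γ (stepSeq O σ w v (i - w.length)).2

/-- `σ1` is a winning strategy of Player 1 from `(w, v)` for winning condition `W`. -/
def Winning1 (O : Arena V C) (W : Set (ℕ → C)) (σ1 : List C → V → V)
    (w : List C) (v : V) : Prop :=
  ∀ σ2, O.Valid2 σ2 → O.play (O.combine σ1 σ2) w v ∈ W

/-- `σ2` is a winning strategy of Player 2 from `(w, v)` for winning condition `W`. -/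
def Winning2 (O : Arena V C) (W : Set (ℕ → C)) (σ2 : List C → V → V)
    (w : List C) (v : V) : Prop :=
  ∀ σ1, O.Valid1 σ1 → O.play (O.combine σ1 σ2) w v ∉ W

/-- Player 1 has a winning strategy from `(w, v)`. -/
def Wins1From (O : Arena V C) (W : Set (ℕ → C)) (w : List C) (v : V) : Prop :=
  ∃ σ1, O.Valid1 σ1 ∧ O.Winning1 W σ1 w v

/-- Player 2 has a winning strategy from `(w, v)`. -/
def Wins2From (O : Arena V C) (W : Set (ℕ → C)) (w : List C) (v : V) : Prop :=
  ∃ σ2, O.Valid2 σ2 ∧ O.Winning2 W σ2 w v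

/-- A strategy (of the player owning the vertices `Vi`) is finite-memory:
it is computed by a Moore machine with finitely many states. -/
def IsFM (Vi : Set V) (σ : List C → V → V) : Prop :=
  ∃ (M : Type) (_ : Fintype M) (m0 : M) (αu : M → C → M) (αn : M → V → V),
    ∀ (w : List C), ∀ v ∈ Vi, σ w v = αn (w.foldl αu m0) v

/-- Finite-memory of size at most `k`. -/
def IsFMSize (Vi : Set V) (σ : List C → V → V) (k : ℕ) : Prop :=
  ∃ (M : Type) (inst : Fintype M), @Fintype.card M inst ≤ k ∧
    ∃ (m0 : M) (αu : M → C → M) (αn : M → V → V),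
      ∀ (w : List C), ∀ v ∈ Vi, σ w v = αn (w.foldl αu m0) v

/-- The hSPE conditions for the profile `(σ1, σ2)` at `(w, v)`. -/
def hSPEAt (O : Arena V C) (W : Set (ℕ → C)) (σ1 σ2 : List C → V → V)
    (w : List C) (v : V) : Prop :=
  (O.play (O.combine σ1 σ2) w v ∈ W →
    ∀ σ2', O.Valid2 σ2' → O.play (O.combine σ1 σ2') w v ∈ W) ∧
  (O.play (O.combine σ1 σ2) w v ∉ W →
    ∀ σ1', O.Valid1 σ1' → O.play (O.combine σ1' σ2) w v ∉ W)

/-- Hypothetical subgame-perfect equilibrium: hSPE conditions at every `(w, v) ∈ C^* × V`. -/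
def IsHSPE (O : Arena V C) (W : Set (ℕ → C)) (σ1 σ2 : List C → V → V) : Prop :=
  O.Valid1 σ1 ∧ O.Valid2 σ2 ∧ ∀ (w : List C), ∀ v ∈ O.vertices, O.hSPEAt W σ1 σ2 w v

/-- Histories realizable in the arena: `w` is the color sequence of a path ending at `v`. -/
inductive Hist (O : Arena V C) : List C → V → Prop
  | base (v : V) (hv : v ∈ O.vertices) : Hist O [] v
  | step {w : List C} {v : V} (h : Hist O w v) {v' : V} (he : (v, v') ∈ O.E) :
      Hist O (w ++ [O.Γ v]) v'

/-- Subgame-perfect equilibrium: hSPE conditions at every realizable `(w, v)`. -/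
def IsSPE (O : Arena V C) (W : Set (ℕ → C)) (σ1 σ2 : List C → V → V) : Prop :=
  O.Valid1 σ1 ∧ O.Valid2 σ2 ∧ ∀ (w : List C) (v : V), O.Hist w v → O.hSPEAt W σ1 σ2 w v

/-- A game is regularly-predictable if for each vertex `v` a finite automaton recognizes
the histories from which Player 1 has a winning strategy at `v`. -/
def RegularlyPredictable (O : Arena V C) (W : Set (ℕ → C)) : Prop :=
  ∀ v ∈ O.vertices, ∃ (Q : Type) (_ : Fintype Q) (A : DFA C Q),
    ∀ w : List C, w ∈ A.accepts ↔ O.Wins1From W w v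

/-- The game has a finite-memory hSPE. -/
def HasFMhSPE (O : Arena V C) (W : Set (ℕ → C)) : Prop :=
  ∃ σ1 σ2, O.IsHSPE W σ1 σ2 ∧ IsFM O.V1 σ1 ∧ IsFM O.V2 σ2

/-- The game has a finite-memory SPE. -/
def HasFMSPE (O : Arena V C) (W : Set (ℕ → C)) : Prop :=
  ∃ σ1 σ2, O.IsSPE W σ1 σ2 ∧ IsFM O.V1 σ1 ∧ IsFM O.V2 σ2

end Arena

/-- The prefix of length `n` of an infinite sequence of colors. -/
def seqPrefix {C : Type} (ρ : ℕ → C) (n : ℕ) : List C := (List.range n).map ρ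

/-- A language is regular if it is accepted by a DFA with a finite state set. -/
def IsRegularLang {C : Type} (L : Set (List C)) : Prop :=
  ∃ (Q : Type) (_ : Fintype Q) (A : DFA C Q), ∀ w : List C, w ∈ A.accepts ↔ w ∈ L

/-- `Rl 𝒲 l`: winning conditions obtained as a Boolean combination of members of `𝒲`
and of `l` conditions `Pref(ρ) ∩ Lⱼ = ∅` with the `Lⱼ` regular. -/
def Rl {C : Type} (𝒲 : Set (Set (ℕ → C))) (l : ℕ) : Set (Set (ℕ → C)) :=
  { W' | ∃ (k : ℕ) (φ : (Fin k → Prop) → (Fin l → Prop) → Prop)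
      (Ws : Fin k → Set (ℕ → C)) (Ls : Fin l → Set (List C)),
      (∀ i, Ws i ∈ 𝒲) ∧ (∀ j, IsRegularLang (Ls j)) ∧
      W' = {ρ | φ (fun i => ρ ∈ Ws i) (fun j => ∀ n : ℕ, seqPrefix ρ n ∉ Ls j)} }

/-- Prepending a color to an infinite sequence. -/
def consSeq {C : Type} (c : C) (ρ : ℕ → C) : ℕ → C
  | 0 => c
  | n + 1 => ρ n

/-- The battery-like energy level sequence: `e 0 = 0`, `e (k+1) = min (e k + d k) b`. -/
def batteryLevel (d : ℕ → ℤ) (b : ℤ) : ℕ → ℤ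
  | 0 => 0
  | k + 1 => min (batteryLevel d b k + d k) b

namespace SPEAux

open Classical

/-- States occurring infinitely often in an infinite sequence. -/
def InfOcc {α : Type} (π : ℕ → α) : Set α := {a | ∀ N, ∃ k ≥ N, π k = a}

variable {α : Type}

lemma infOcc_shift (π : ℕ → α) (N : ℕ) : InfOcc (fun k => π (k + N)) = InfOcc π := by
  ext a
  constructor
  · intro h M
    obtain ⟨k, hk, he⟩ := h M
    exact ⟨k + N, le_trans hk (Nat.le_add_right _ _), he⟩
  · intro h M
    obtain ⟨k, hk, he⟩ := h (M + N)
    refine ⟨k - N, by omega, ?_⟩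
    show π (k - N + N) = a
    have : k - N + N = k := by omega
    rw [this]; exact he

lemma infOcc_cons (π : ℕ → α) (a : α) :
    InfOcc (fun k => Nat.casesOn k a π) = InfOcc π := by
  rw [← infOcc_shift (fun k => (Nat.casesOn k a π : α)) 1]

/-- Eventually, the sequence only visits states that occur infinitely often. -/
lemma eventually_infOcc [Fintype α] (π : ℕ → α) :
    ∃ N, ∀ k ≥ N, π k ∈ InfOcc π := by
  have h : ∀ a : α, a ∉ InfOcc π → ∃ N, ∀ k ≥ N, π k ≠ a := by
    intro a ha
    by_contra hc
    push_neg at hc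
    apply ha
    intro N
    obtain ⟨k, hk, he⟩ := hc N
    exact ⟨k, hk, he⟩
  choose f hf using h
  classical
  refine ⟨Finset.univ.sup (fun a : α => if h : a ∉ InfOcc π then f a h else 0), ?_⟩
  intro k hk
  by_contra hmem
  have hle : (if h : π k ∉ InfOcc π then f (π k) h else 0) ≤ k :=
    le_trans (Finset.le_sup (f := fun a : α => if h : a ∉ InfOcc π then f a h else 0)
      (Finset.mem_univ (π k))) hk
  rw [dif_pos hmem] at hle
  exact hf (π k) hmem k hle rfl

/-- Pigeonhole: if the sequence is in `T` infinitely often, some element of `T`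
occurs infinitely often. -/
lemma exists_infOcc_of_frequently [Fintype α] (π : ℕ → α) (T : Set α)
    (h : ∀ N, ∃ k ≥ N, π k ∈ T) : ∃ a ∈ T, a ∈ InfOcc π := by
  obtain ⟨N, hN⟩ := eventually_infOcc π
  obtain ⟨k, hk, hmem⟩ := h N
  exact ⟨π k, hmem, hN k hk⟩

lemma infOcc_nonempty [Fintype α] (π : ℕ → α) : (InfOcc π).Nonempty := by
  obtain ⟨a, _, ha⟩ := exists_infOcc_of_frequently π Set.univ (fun N => ⟨N, le_refl _, trivial⟩)
  exact ⟨a, ha⟩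

/-- All elements of `InfOcc` appear within some window past `N0`. -/
lemma exists_window [Fintype α] (π : ℕ → α) (N0 : ℕ) :
    ∃ N1, N0 ≤ N1 ∧ ∀ a ∈ InfOcc π, ∃ k, N0 ≤ k ∧ k < N1 ∧ π k = a := by
  classical
  have h : ∀ a : α, a ∈ InfOcc π → ∃ k ≥ N0, π k = a := fun a ha => ha N0
  choose f hf using h
  refine ⟨Finset.univ.sup (fun a : α => if h : a ∈ InfOcc π then f a h + 1 else 0) + N0,
    le_add_self, ?_⟩
  intro a ha
  refine ⟨f a ha, (hf a ha).1, ?_, (hf a ha).2⟩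
  have hle : (if h : a ∈ InfOcc π then f a h + 1 else 0) ≤
      Finset.univ.sup (fun a : α => if h : a ∈ InfOcc π then f a h + 1 else 0) :=
    Finset.le_sup (f := fun a : α => if h : a ∈ InfOcc π then f a h + 1 else 0)
      (Finset.mem_univ a)
  rw [dif_pos ha] at hle
  omega


section Parity

variable {S : Type} [Fintype S] [DecidableEq S]

structure PArena (S : Type) where
  own : S → Bool
  R : S → S → Prop
  pr : S → ℕ

variable (A : PArena S)

def IsPlay (U : Finset S) (π : ℕ → S) : Prop := ∀ k, π k ∈ U ∧ A.R (π k) (π (k + 1))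

noncomputable def maxPr (π : ℕ → S) : ℕ := sSup (A.pr '' InfOcc π)

def WinCond (i : Bool) (π : ℕ → S) : Prop := Even (maxPr A π) ↔ i = true

def ConsW (i : Bool) (nx : S → S) (π : ℕ → S) : Prop :=
  ∀ k, A.own (π k) = i → π (k + 1) = nx (π k)

def ValidOn (i : Bool) (U : Finset S) (nx : S → S) : Prop :=
  ∀ s ∈ U, A.own s = i → nx s ∈ U ∧ A.R s (nx s)

def WinsFor (i : Bool) (U : Finset S) (nx : S → S) (s : S) : Prop :=
  ∀ π, IsPlay A U π → π 0 = s → ConsW A i nx π → WinCond A i π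

def Tot (U : Finset S) : Prop := ∀ s ∈ U, ∃ t ∈ U, A.R s t

lemma winCond_not (i : Bool) (π : ℕ → S) : WinCond A i π ↔ ¬ WinCond A (!i) π := by
  cases i <;> simp [WinCond]

open Classical in
noncomputable def attrStep (i : Bool) (U T : Finset S) : Finset S :=
  T ∪ U.filter (fun s =>
    if A.own s = i then ∃ t ∈ T, A.R s t else ∀ t ∈ U, A.R s t → t ∈ T)

noncomputable def attrN (i : Bool) (U P : Finset S) : ℕ → Finset S
  | 0 => P
  | n + 1 => attrStep A i U (attrN i U P n)

noncomputable def attr (i : Bool) (U P : Finset S) : Finset S := attrN A i U P U.card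

variable {A}

lemma attrN_mono {i : Bool} {U P : Finset S} {m n : ℕ} (h : m ≤ n) :
    attrN A i U P m ⊆ attrN A i U P n := by
  induction n with
  | zero => simp_all
  | succ n ih =>
    rcases Nat.lt_or_ge m (n+1) with h' | h'
    · exact subset_trans (ih (by omega)) Finset.subset_union_left
    · have : m = n + 1 := by omega
      subst this; exact subset_refl _

lemma attrN_subset_U {i : Bool} {U P : Finset S} (hP : P ⊆ U) (n : ℕ) :
    attrN A i U P n ⊆ U := by
  induction n with
  | zero => exact hP
  | succ n ih =>
    intro s hs
    rcases Finset.mem_union.mp hs with h | h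
    · exact ih h
    · exact (Finset.mem_filter.mp h).1

lemma subset_attr {i : Bool} {U P : Finset S} : P ⊆ attr A i U P :=
  attrN_mono (Nat.zero_le _)

lemma attr_subset_U {i : Bool} {U P : Finset S} (hP : P ⊆ U) : attr A i U P ⊆ U :=
  attrN_subset_U hP _

lemma attrN_eq_propagate {i : Bool} {U P : Finset S} {n : ℕ}
    (h : attrN A i U P (n+1) = attrN A i U P n) :
    ∀ m, n ≤ m → attrN A i U P m = attrN A i U P n := by
  intro m hm
  induction m with
  | zero =>
    have hn0 : n = 0 := by omega
    rw [hn0]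
  | succ m ih =>
    rcases Nat.lt_or_ge n (m+1) with h' | h'
    · have hmn : n ≤ m := by omega
      have : attrN A i U P (m+1) = attrStep A i U (attrN A i U P m) := rfl
      rw [this, ih hmn]
      exact h
    · have : n = m + 1 := by omega
      simp [this]

lemma attr_fix {i : Bool} {U P : Finset S} (hP : P ⊆ U) :
    attrStep A i U (attr A i U P) = attr A i U P := by
  have key : ∃ n, n ≤ U.card ∧ attrN A i U P (n+1) = attrN A i U P n := by
    by_contra hc
    push_neg at hc
    have grow : ∀ n, n ≤ U.card + 1 → n ≤ (attrN A i U P n).card := by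
      intro n hn
      induction n with
      | zero => omega
      | succ n ih =>
        have h1 : n ≤ (attrN A i U P n).card := ih (by omega)
        have hne : attrN A i U P (n+1) ≠ attrN A i U P n := hc n (by omega)
        have hss : attrN A i U P n ⊂ attrN A i U P (n+1) :=
          Finset.ssubset_iff_subset_ne.mpr ⟨attrN_mono (by omega), fun he => hne he.symm⟩
        have := Finset.card_lt_card hss
        omega
    have h1 := grow (U.card + 1) (le_refl _)
    have h2 := Finset.card_le_card (attrN_subset_U (A := A) (i := i) hP (U.card + 1))
    omega
  obtain ⟨n, hn, heq⟩ := key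
  have h1 : attr A i U P = attrN A i U P n := attrN_eq_propagate heq _ hn
  have h2 : attrN A i U P (U.card + 1) = attrN A i U P n := attrN_eq_propagate heq _ (by omega)
  show attrN A i U P (U.card + 1) = attr A i U P
  rw [h1, h2]

noncomputable def rank (A : PArena S) (i : Bool) (U P : Finset S) (s : S) : ℕ :=
  sInf {n | s ∈ attrN A i U P n}

lemma mem_attrN_rank {i : Bool} {U P : Finset S} {s : S} (hs : s ∈ attr A i U P) :
    s ∈ attrN A i U P (rank A i U P s) := by
  have h : rank A i U P s ∈ {n | s ∈ attrN A i U P n} := Nat.sInf_mem ⟨U.card, hs⟩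
  exact h

lemma rank_le_of_mem {i : Bool} {U P : Finset S} {s : S} {n : ℕ}
    (hs : s ∈ attrN A i U P n) : rank A i U P s ≤ n :=
  Nat.sInf_le hs

lemma attr_step_dec {i : Bool} {U P : Finset S} (hP : P ⊆ U) {s : S}
    (hs : s ∈ attr A i U P) (hsP : s ∉ P) :
    (A.own s = i → ∃ t, t ∈ attr A i U P ∧ A.R s t ∧ rank A i U P t < rank A i U P s) ∧
    (A.own s ≠ i → ∀ t ∈ U, A.R s t →
      t ∈ attr A i U P ∧ rank A i U P t < rank A i U P s) := by
  have hmem : s ∈ attrN A i U P (rank A i U P s) := mem_attrN_rank hs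
  have hn0 : rank A i U P s ≠ 0 := by
    intro h
    rw [h] at hmem
    exact hsP hmem
  obtain ⟨n', hn'⟩ : ∃ n', rank A i U P s = n' + 1 := ⟨rank A i U P s - 1, by omega⟩
  rw [hn'] at hmem
  have hnot : s ∉ attrN A i U P n' := by
    intro h
    have := rank_le_of_mem h
    omega
  have hstep : s ∈ attrStep A i U (attrN A i U P n') := hmem
  have hcard : n' ≤ U.card := by
    have := rank_le_of_mem (hs : s ∈ attrN A i U P U.card)
    omega
  rcases Finset.mem_union.mp hstep with h | h
  · exact absurd h hnot
  · obtain ⟨hsU, hpred⟩ := Finset.mem_filter.mp h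
    constructor
    · intro hown
      rw [if_pos hown] at hpred
      obtain ⟨t, ht, hRt⟩ := hpred
      have htr : rank A i U P t ≤ n' := rank_le_of_mem ht
      exact ⟨t, attrN_mono hcard ht, hRt, by omega⟩
    · intro hown
      rw [if_neg hown] at hpred
      intro t htU hRt
      have ht := hpred t htU hRt
      have htr : rank A i U P t ≤ n' := rank_le_of_mem ht
      exact ⟨attrN_mono hcard ht, by omega⟩

lemma attr_compl_own {i : Bool} {U P : Finset S} (hP : P ⊆ U) {s : S}
    (hsU : s ∈ U) (hns : s ∉ attr A i U P) (hown : A.own s = i) :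
    ∀ t ∈ attr A i U P, ¬ A.R s t := by
  intro t ht hRt
  apply hns
  rw [← attr_fix hP]
  apply Finset.mem_union_right
  rw [Finset.mem_filter]
  exact ⟨hsU, by rw [if_pos hown]; exact ⟨t, ht, hRt⟩⟩

lemma attr_compl_opp {i : Bool} {U P : Finset S} (hP : P ⊆ U) {s : S}
    (hsU : s ∈ U) (hns : s ∉ attr A i U P) (hown : A.own s ≠ i) :
    ∃ t ∈ U, t ∉ attr A i U P ∧ A.R s t := by
  by_contra hc
  push_neg at hc
  apply hns
  rw [← attr_fix hP]
  apply Finset.mem_union_right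
  rw [Finset.mem_filter]
  refine ⟨hsU, by
    rw [if_neg hown]
    intro t htU hRt
    by_contra h2
    exact hc t htU h2 hRt⟩

lemma tot_compl {i : Bool} {U P : Finset S} (hT : Tot A U) (hP : P ⊆ U) :
    Tot A (U \ attr A i U P) := by
  intro s hs
  obtain ⟨hsU, hns⟩ := Finset.mem_sdiff.mp hs
  by_cases hown : A.own s = i
  · obtain ⟨t, htU, hRt⟩ := hT s hsU
    refine ⟨t, Finset.mem_sdiff.mpr ⟨htU, ?_⟩, hRt⟩
    intro ht
    exact attr_compl_own hP hsU hns hown t ht hRt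
  · obtain ⟨t, htU, hnt, hRt⟩ := attr_compl_opp hP hsU hns hown
    exact ⟨t, Finset.mem_sdiff.mpr ⟨htU, hnt⟩, hRt⟩

/-- Under a strategy that is attracting on `attr \ P`, any play entering the attractor
reaches `P`. -/
lemma attr_reach {i : Bool} {U P : Finset S} (hP : P ⊆ U) {π : ℕ → S} {nx : S → S}
    (hπ : IsPlay A U π) (hcons : ConsW A i nx π)
    (hnx : ∀ s, s ∈ attr A i U P → s ∉ P → A.own s = i →
      nx s ∈ attr A i U P ∧ rank A i U P (nx s) < rank A i U P s) :
    ∀ k, π k ∈ attr A i U P → ∃ k' ≥ k, π k' ∈ P := by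
  have main : ∀ n, ∀ k, π k ∈ attr A i U P → rank A i U P (π k) ≤ n →
      ∃ k' ≥ k, π k' ∈ P := by
    intro n
    induction n with
    | zero =>
      intro k hk hr
      by_cases hmem : π k ∈ P
      · exact ⟨k, le_refl _, hmem⟩
      · exfalso
        by_cases hown : A.own (π k) = i
        · obtain ⟨t, _, _, hlt⟩ := (attr_step_dec hP hk hmem).1 hown
          omega
        · obtain ⟨hU, hR⟩ := hπ k
          have := ((attr_step_dec hP hk hmem).2 hown) (π (k+1)) (hπ (k+1)).1 hR
          omega
    | succ n ih =>
      intro k hk hr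
      by_cases hmem : π k ∈ P
      · exact ⟨k, le_refl _, hmem⟩
      · by_cases hown : A.own (π k) = i
        · have hstep := hcons k hown
          obtain ⟨hmem', hlt⟩ := hnx (π k) hk hmem hown
          rw [← hstep] at hmem' hlt
          obtain ⟨k', hk', hP'⟩ := ih (k+1) hmem' (by omega)
          exact ⟨k', by omega, hP'⟩
        · obtain ⟨hU, hR⟩ := hπ k
          obtain ⟨hmem', hlt⟩ := ((attr_step_dec hP hk hmem).2 hown) (π (k+1)) (hπ (k+1)).1 hR
          obtain ⟨k', hk', hP'⟩ := ih (k+1) hmem' (by omega)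
          exact ⟨k', by omega, hP'⟩
  intro k hk
  exact main (rank A i U P (π k)) k hk (le_refl _)





lemma bool_resolve {a b : Bool} (h : a ≠ b) : a = !b := by
  cases a <;> cases b <;> simp_all

omit [Fintype S] [DecidableEq S] in
lemma winCond_not' (i : Bool) (π : ℕ → S) : WinCond A i π ↔ ¬ WinCond A (!i) π := by
  cases i <;> simp [WinCond]

omit [Fintype S] [DecidableEq S] in
lemma infOcc_mem_U {U : Finset S} {π : ℕ → S} (hπ : IsPlay A U π) {a : S}
    (ha : a ∈ InfOcc π) : a ∈ U := by
  obtain ⟨k, _, hk⟩ := ha 0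
  rw [← hk]; exact (hπ k).1

omit [DecidableEq S] in
lemma le_maxPr {π : ℕ → S} {a : S} (ha : a ∈ InfOcc π) : A.pr a ≤ maxPr A π :=
  le_csSup ((Set.toFinite (InfOcc π)).image _).bddAbove ⟨a, ha, rfl⟩

omit [DecidableEq S] in
lemma maxPr_le {π : ℕ → S} {p : ℕ} (h : ∀ a ∈ InfOcc π, A.pr a ≤ p) : maxPr A π ≤ p :=
  csSup_le ((infOcc_nonempty π).image _) (by rintro b ⟨a, ha, rfl⟩; exact h a ha)

omit [DecidableEq S] in
lemma maxPr_mem (π : ℕ → S) : ∃ a ∈ InfOcc π, A.pr a = maxPr A π := by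
  have h := Nat.sSup_mem ((infOcc_nonempty π).image A.pr)
    ((Set.toFinite (InfOcc π)).image _).bddAbove
  obtain ⟨a, ha, he⟩ := h
  exact ⟨a, ha, he⟩

omit [Fintype S] [DecidableEq S] in
lemma maxPr_shift (π : ℕ → S) (N : ℕ) : maxPr A (fun k => π (k + N)) = maxPr A π := by
  unfold maxPr; rw [infOcc_shift]

omit [Fintype S] [DecidableEq S] in
lemma maxPr_cons (π : ℕ → S) (a : S) :
    maxPr A (fun k => Nat.casesOn k a π) = maxPr A π := by
  unfold maxPr; rw [infOcc_cons]

omit [Fintype S] [DecidableEq S] in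
lemma isPlay_shift {U : Finset S} {π : ℕ → S} (hπ : IsPlay A U π) (N : ℕ) :
    IsPlay A U (fun k => π (k + N)) := by
  intro k
  refine ⟨(hπ (k + N)).1, ?_⟩
  have h : k + 1 + N = k + N + 1 := by omega
  show A.R (π (k + N)) (π (k + 1 + N))
  rw [h]; exact (hπ (k + N)).2

omit [Fintype S] [DecidableEq S] in
lemma consW_shift {i : Bool} {nx : S → S} {π : ℕ → S} (h : ConsW A i nx π) (N : ℕ) :
    ConsW A i nx (fun k => π (k + N)) := by
  intro k hk
  have he : k + 1 + N = k + N + 1 := by omega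
  show π (k + 1 + N) = nx (π (k + N))
  rw [he]; exact h (k + N) hk

omit [Fintype S] [DecidableEq S] in
lemma isPlay_cons {U : Finset S} {π : ℕ → S} {s : S} (hπ : IsPlay A U π)
    (hs : s ∈ U) (hR : A.R s (π 0)) : IsPlay A U (fun k => Nat.casesOn k s π) := by
  intro k
  cases k with
  | zero => exact ⟨hs, hR⟩
  | succ k => exact ⟨(hπ k).1, (hπ k).2⟩

omit [Fintype S] [DecidableEq S] in
lemma consW_cons {i : Bool} {nx : S → S} {π : ℕ → S} {s : S} (h : ConsW A i nx π)
    (h0 : A.own s = i → π 0 = nx s) : ConsW A i nx (fun k => Nat.casesOn k s π) := by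
  intro k
  cases k with
  | zero => exact h0
  | succ k => exact h k

omit [Fintype S] [DecidableEq S] in
/-- If a player wins from `s` and owns `s`, they win from their strategy's move. -/
lemma wins_step {i : Bool} {U : Finset S} {nx : S → S} {s : S}
    (hval : ValidOn A i U nx) (hsU : s ∈ U) (hown : A.own s = i)
    (hw : WinsFor A i U nx s) : WinsFor A i U nx (nx s) := by
  intro π hπ h0 hcons
  have hR : A.R s (π 0) := by rw [h0]; exact (hval s hsU hown).2
  have h1 : WinCond A i (fun k => Nat.casesOn k s π) :=
    hw _ (isPlay_cons hπ hsU hR) rfl (consW_cons hcons (fun _ => h0))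
  unfold WinCond at h1 ⊢
  rwa [maxPr_cons] at h1

/-- The two players cannot both win (via an edge `s → t` owned by player `i`). -/
lemma not_both {i : Bool} {U : Finset S} {nxa nxb : S → S} {s t : S}
    (hvala : ValidOn A i U nxa) (hvalb : ValidOn A (!i) U nxb)
    (hsU : s ∈ U) (htU : t ∈ U) (hown : A.own s = i) (hR : A.R s t)
    (hws : WinsFor A (!i) U nxb s) (hwt : WinsFor A i U nxa t) : False := by
  classical
  set f : S → S := fun x => if A.own x = i then nxa x else nxb x with hfdef
  have hf : ∀ x, f x = if A.own x = i then nxa x else nxb x := fun x => rfl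
  set ρ : ℕ → S := fun k => f^[k] t with hρ
  have hρ0 : ρ 0 = t := rfl
  have hρs : ∀ k, ρ (k + 1) = f (ρ k) := by
    intro k; simp [hρ, Function.iterate_succ_apply']
  have hmem : ∀ k, ρ k ∈ U := by
    intro k
    induction k with
    | zero => exact htU
    | succ k ih =>
      rw [hρs k, hf (ρ k)]
      by_cases ho : A.own (ρ k) = i
      · rw [if_pos ho]; exact (hvala _ ih ho).1
      · rw [if_neg ho]; exact (hvalb _ ih (bool_resolve ho)).1
  have hplay : IsPlay A U ρ := by
    intro k
    refine ⟨hmem k, ?_⟩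
    rw [hρs k, hf (ρ k)]
    by_cases ho : A.own (ρ k) = i
    · rw [if_pos ho]; exact (hvala _ (hmem k) ho).2
    · rw [if_neg ho]; exact (hvalb _ (hmem k) (bool_resolve ho)).2
  have hconsa : ConsW A i nxa ρ := by
    intro k hk; rw [hρs k, hf (ρ k), if_pos hk]
  have hconsb : ConsW A (!i) nxb ρ := by
    intro k hk
    rw [hρs k, hf (ρ k), if_neg (by rw [hk]; cases i <;> simp)]
  have hwc1 : WinCond A i ρ := hwt ρ hplay hρ0 hconsa
  have hR0 : A.R s (ρ 0) := by rw [hρ0]; exact hR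
  have hwc2 : WinCond A (!i) (fun k => Nat.casesOn k s ρ) :=
    hws _ (isPlay_cons hplay hsU hR0) rfl
      (consW_cons hconsb (fun h => absurd (hown.symm.trans h) (by cases i <;> simp)))
  have hwc2' : WinCond A (!i) ρ := by
    unfold WinCond at hwc2 ⊢; rwa [maxPr_cons] at hwc2
  exact ((winCond_not' i ρ).mp hwc1) hwc2'


lemma bool_not_ne (b : Bool) : (!b) ≠ b := by cases b <;> simp

noncomputable def attNx (A : PArena S) (i : Bool) (U P : Finset S) (g : S → S) : S → S :=
  fun s =>
    if h : P ⊆ U ∧ s ∈ attr A i U P ∧ s ∉ P ∧ A.own s = i then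
      (((attr_step_dec h.1 h.2.1 h.2.2.1).1) h.2.2.2).choose
    else g s

lemma attNx_spec {i : Bool} {U P : Finset S} (g : S → S) (hP : P ⊆ U) {s : S}
    (h1 : s ∈ attr A i U P) (h2 : s ∉ P) (h3 : A.own s = i) :
    attNx A i U P g s ∈ attr A i U P ∧ A.R s (attNx A i U P g s) ∧
      rank A i U P (attNx A i U P g s) < rank A i U P s := by
  have he : attNx A i U P g s = (((attr_step_dec hP h1 h2).1) h3).choose := by
    simp only [attNx]
    rw [dif_pos ⟨hP, h1, h2, h3⟩]
  rw [he]
  exact (((attr_step_dec hP h1 h2).1) h3).choose_spec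

lemma attNx_eq_g {i : Bool} {U P : Finset S} {g : S → S} {s : S}
    (h : ¬(P ⊆ U ∧ s ∈ attr A i U P ∧ s ∉ P ∧ A.own s = i)) :
    attNx A i U P g s = g s := by
  simp only [attNx]
  rw [dif_neg h]

/-- Uniform positional determinacy of finite parity games. -/
theorem parityDet (A : PArena S) :
    ∀ U : Finset S, Tot A U →
    ∃ nx : Bool → S → S, (∀ i, ValidOn A i U (nx i)) ∧
      ∀ s ∈ U, ∃ i, WinsFor A i U (nx i) s := by
  intro U
  induction U using Finset.strongInduction with
  | _ U IH =>
  intro hT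
  classical
  rcases Finset.eq_empty_or_nonempty U with rfl | hUne
  · exact ⟨fun _ s => s, fun i s hs _ => absurd hs (Finset.notMem_empty s),
      fun s hs => absurd hs (Finset.notMem_empty s)⟩
  -- default valid successor function
  have hch : ∀ s : S, ∃ t : S, (s ∈ U → t ∈ U ∧ A.R s t) := by
    intro s
    by_cases hs : s ∈ U
    · obtain ⟨t, ht, hR⟩ := hT s hs
      exact ⟨t, fun _ => ⟨ht, hR⟩⟩
    · exact ⟨s, fun h => absurd h hs⟩
  choose g hg using hch
  have hval_g : ∀ i, ValidOn A i U g := fun i s hs _ => hg s hs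
  -- the top priority and its owner
  have hne_img : (U.image A.pr).Nonempty := hUne.image _
  set p := (U.image A.pr).max' hne_img with hpdef
  set iP : Bool := decide (Even p) with hiPdef
  have hiP : Even p ↔ iP = true := by rw [hiPdef]; simp
  have hprle : ∀ s ∈ U, A.pr s ≤ p := fun s hs =>
    Finset.le_max' _ _ (Finset.mem_image_of_mem _ hs)
  set P := U.filter (fun s => A.pr s = p) with hPdef
  have hPU : P ⊆ U := Finset.filter_subset _ _
  have hPne : P.Nonempty := by
    obtain ⟨s, hs, hps⟩ := Finset.mem_image.mp ((U.image A.pr).max'_mem hne_img)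
    exact ⟨s, Finset.mem_filter.mpr ⟨hs, hps⟩⟩
  have hprP : ∀ s ∈ P, A.pr s = p := fun s hs => (Finset.mem_filter.mp hs).2
  set A1 := attr A iP U P with hA1def
  have hA1U : A1 ⊆ U := attr_subset_U hPU
  have hA1ne : A1.Nonempty := hPne.mono subset_attr
  set U1 := U \ A1 with hU1def
  have hU1ss : U1 ⊂ U := Finset.sdiff_ssubset hA1U hA1ne
  have hTot1 : Tot A U1 := tot_compl hT hPU
  obtain ⟨nx', hval', hwin'⟩ := IH _ hU1ss hTot1
  by_cases hWe : (U1.filter (fun s => WinsFor A (!iP) U1 (nx' (!iP)) s)).Nonempty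
  · -- Case 2: the opponent wins somewhere in the subgame
    set W' := U1.filter (fun s => WinsFor A (!iP) U1 (nx' (!iP)) s) with hW'def
    have hW'U1 : W' ⊆ U1 := Finset.filter_subset _ _
    have hW'U : W' ⊆ U := subset_trans hW'U1 Finset.sdiff_subset
    have hW'win : ∀ s ∈ W', WinsFor A (!iP) U1 (nx' (!iP)) s := fun s hs =>
      (Finset.mem_filter.mp hs).2
    set B1 := attr A (!iP) U W' with hB1def
    have hB1U : B1 ⊆ U := attr_subset_U hW'U
    have hB1ne : B1.Nonempty := hWe.mono subset_attr
    set U2 := U \ B1 with hU2def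
    have hU2ss : U2 ⊂ U := Finset.sdiff_ssubset hB1U hB1ne
    obtain ⟨nx'', hval'', hwin''⟩ := IH _ hU2ss (tot_compl hT hW'U)
    set nxI : S → S := fun s => if s ∈ U2 then nx'' iP s else g s with hnxIdef
    set nxJ : S → S := fun s =>
      if s ∈ W' then nx' (!iP) s else
      if s ∈ U2 then nx'' (!iP) s else attNx A (!iP) U W' g s with hnxJdef
    have hnxIe : ∀ s, nxI s = if s ∈ U2 then nx'' iP s else g s := fun s => rfl
    have hnxJe : ∀ s, nxJ s = if s ∈ W' then nx' (!iP) s else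
        if s ∈ U2 then nx'' (!iP) s else attNx A (!iP) U W' g s := fun s => rfl
    have hvalI : ValidOn A iP U nxI := by
      intro s hs hown
      rw [hnxIe s]
      by_cases h2 : s ∈ U2
      · rw [if_pos h2]
        obtain ⟨ha, hb⟩ := hval'' iP s h2 hown
        exact ⟨(Finset.mem_sdiff.mp ha).1, hb⟩
      · rw [if_neg h2]; exact hg s hs
    have hvalJ : ValidOn A (!iP) U nxJ := by
      intro s hs hown
      rw [hnxJe s]
      by_cases h1 : s ∈ W'
      · rw [if_pos h1]
        obtain ⟨ha, hb⟩ := hval' (!iP) s (hW'U1 h1) hown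
        exact ⟨(Finset.mem_sdiff.mp ha).1, hb⟩
      · rw [if_neg h1]
        by_cases h2 : s ∈ U2
        · rw [if_pos h2]
          obtain ⟨ha, hb⟩ := hval'' (!iP) s h2 hown
          exact ⟨(Finset.mem_sdiff.mp ha).1, hb⟩
        · rw [if_neg h2]
          have hsB : s ∈ B1 := by
            by_contra hc
            exact h2 (Finset.mem_sdiff.mpr ⟨hs, hc⟩)
          obtain ⟨ha, hb, _⟩ := attNx_spec g hW'U hsB h1 hown
          exact ⟨hB1U ha, hb⟩
    have hwinI : ∀ s ∈ U2, WinsFor A iP U2 (nx'' iP) s → WinsFor A iP U nxI s := by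
      intro s hs2 hw π hπ h0 hcons
      have hstay : ∀ k, π k ∈ U2 := by
        intro k
        induction k with
        | zero => rw [h0]; exact hs2
        | succ k ihk =>
          by_cases hown : A.own (π k) = iP
          · rw [hcons k hown, hnxIe _, if_pos ihk]
            exact (hval'' iP _ ihk hown).1
          · have hown' : A.own (π k) = !iP := bool_resolve hown
            have h1 := attr_compl_own hW'U (Finset.mem_sdiff.mp ihk).1
              (Finset.mem_sdiff.mp ihk).2 hown'
            exact Finset.mem_sdiff.mpr ⟨(hπ (k+1)).1, fun hc => h1 _ hc (hπ k).2⟩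
      exact hw π (fun k => ⟨hstay k, (hπ k).2⟩) h0
        (fun k hk => by rw [hcons k hk, hnxIe _, if_pos (hstay k)])
    have hwinJ : ∀ s, (s ∈ B1 ∨ (s ∈ U2 ∧ WinsFor A (!iP) U2 (nx'' (!iP)) s)) →
        WinsFor A (!iP) U nxJ s := by
      intro s hcase π hπ h0 hcons
      by_cases hWv : ∃ t, π t ∈ W'
      · obtain ⟨t, ht⟩ := hWv
        have hstayW : ∀ k, t ≤ k → π k ∈ W' := by
          intro k hk
          induction k, hk using Nat.le_induction with
          | base => exact ht
          | succ k hk ihk =>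
            have hs1 : π k ∈ U1 := hW'U1 ihk
            by_cases hown : A.own (π k) = !iP
            · rw [hcons _ hown, hnxJe _, if_pos ihk]
              have hstep := wins_step (hval' (!iP)) hs1 hown (hW'win _ ihk)
              have hmem := (hval' (!iP) _ hs1 hown).1
              exact Finset.mem_filter.mpr ⟨hmem, hstep⟩
            · have hown' : A.own (π k) = iP := by
                have := bool_resolve hown; simpa using this
              have hU1mem := Finset.mem_sdiff.mp hs1
              have hnA1 := attr_compl_own hPU hU1mem.1 hU1mem.2 hown'
              have ht'U1 : π (k+1) ∈ U1 :=
                Finset.mem_sdiff.mpr ⟨(hπ (k+1)).1, fun hc => hnA1 _ hc (hπ k).2⟩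
              obtain ⟨i, hi⟩ := hwin' _ ht'U1
              by_cases hieq : i = iP
              · exfalso
                refine not_both (i := iP) (hval' iP) (hval' (!iP)) hs1 ht'U1 hown'
                  (hπ k).2 (hW'win _ ihk) ?_
                rw [← hieq]; exact hi
              · have hieq' : i = !iP := bool_resolve hieq
                exact Finset.mem_filter.mpr ⟨ht'U1, by rw [← hieq']; exact hi⟩
        have hτplay : IsPlay A U1 (fun k => π (k + t)) := by
          intro k
          exact ⟨hW'U1 (hstayW (k+t) (by omega)), (isPlay_shift hπ t k).2⟩
        have hτcons : ConsW A (!iP) (nx' (!iP)) (fun k => π (k + t)) := by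
          intro k hk
          have h1 := consW_shift hcons t k hk
          refine h1.trans ?_
          show nxJ (π (k + t)) = nx' (!iP) (π (k + t))
          rw [hnxJe _, if_pos (hstayW (k+t) (by omega))]
        have hwc := hW'win (π t) ht _ hτplay (by simp) hτcons
        unfold WinCond at hwc ⊢
        rwa [maxPr_shift] at hwc
      · by_cases hBv : ∃ t, π t ∈ B1
        · exfalso
          obtain ⟨t, ht⟩ := hBv
          have hnx : ∀ s', s' ∈ B1 → s' ∉ W' → A.own s' = !iP →
              nxJ s' ∈ B1 ∧ rank A (!iP) U W' (nxJ s') < rank A (!iP) U W' s' := by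
            intro s' h1 h2 h3
            have hs'U2 : s' ∉ U2 := fun hc => (Finset.mem_sdiff.mp hc).2 h1
            have heq : nxJ s' = attNx A (!iP) U W' g s' := by
              rw [hnxJe _, if_neg h2, if_neg hs'U2]
            obtain ⟨ha, _, hc⟩ := attNx_spec g hW'U h1 h2 h3
            rw [heq]
            exact ⟨ha, hc⟩
          obtain ⟨k', _, hk'⟩ := attr_reach hW'U hπ hcons hnx t ht
          push_neg at hWv
          exact hWv k' hk'
        · push_neg at hWv hBv
          have hstay2 : ∀ k, π k ∈ U2 := fun k => Finset.mem_sdiff.mpr ⟨(hπ k).1, hBv k⟩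
          rcases hcase with hB | ⟨hs2, hw⟩
          · have hb0 := hBv 0
            rw [h0] at hb0
            exact absurd hB hb0
          · refine hw π (fun k => ⟨hstay2 k, (hπ k).2⟩) h0 ?_
            intro k hk
            rw [hcons k hk, hnxJe _, if_neg (hWv k), if_pos (hstay2 k)]
    refine ⟨fun j => if j = iP then nxI else nxJ, ?_, ?_⟩
    · intro i
      by_cases hieq : i = iP
      · subst hieq
        show ValidOn A iP U (if iP = iP then nxI else nxJ)
        rw [if_pos rfl]
        exact hvalI
      · have hieq' : i = !iP := bool_resolve hieq
        subst hieq'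
        show ValidOn A (!iP) U (if (!iP) = iP then nxI else nxJ)
        rw [if_neg (bool_not_ne iP)]
        exact hvalJ
    · intro s hs
      by_cases hsB : s ∈ B1
      · refine ⟨!iP, ?_⟩
        show WinsFor A (!iP) U (if (!iP) = iP then nxI else nxJ) s
        rw [if_neg (bool_not_ne iP)]
        exact hwinJ s (Or.inl hsB)
      · have hs2 : s ∈ U2 := Finset.mem_sdiff.mpr ⟨hs, hsB⟩
        obtain ⟨i, hi⟩ := hwin'' s hs2
        by_cases hieq : i = iP
        · refine ⟨iP, ?_⟩
          show WinsFor A iP U (if iP = iP then nxI else nxJ) s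
          rw [if_pos rfl]
          exact hwinI s hs2 (by rw [← hieq]; exact hi)
        · refine ⟨!iP, ?_⟩
          show WinsFor A (!iP) U (if (!iP) = iP then nxI else nxJ) s
          rw [if_neg (bool_not_ne iP)]
          refine hwinJ s (Or.inr ⟨hs2, ?_⟩)
          rw [← bool_resolve hieq]; exact hi
  · -- Case 1: player iP wins everywhere in the subgame, hence everywhere
    have hWempty : ∀ s ∈ U1, WinsFor A iP U1 (nx' iP) s := by
      intro s hs
      obtain ⟨i, hi⟩ := hwin' s hs
      by_cases hieq : i = iP
      · rwa [hieq] at hi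
      · exact absurd ⟨s, Finset.mem_filter.mpr ⟨hs, by rw [← bool_resolve hieq]; exact hi⟩⟩ hWe
    set nxA : S → S := fun s => if s ∈ U1 then nx' iP s else attNx A iP U P g s with hnxAdef
    have hnxAe : ∀ s, nxA s = if s ∈ U1 then nx' iP s else attNx A iP U P g s := fun s => rfl
    have hvalA : ValidOn A iP U nxA := by
      intro s hs hown
      rw [hnxAe s]
      by_cases h1 : s ∈ U1
      · rw [if_pos h1]
        obtain ⟨ha, hb⟩ := hval' iP s h1 hown
        exact ⟨(Finset.mem_sdiff.mp ha).1, hb⟩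
      · rw [if_neg h1]
        have hsA : s ∈ A1 := by
          by_contra hc
          exact h1 (Finset.mem_sdiff.mpr ⟨hs, hc⟩)
        by_cases h2 : s ∈ P
        · rw [attNx_eq_g (fun hcon => hcon.2.2.1 h2)]
          exact hg s hs
        · obtain ⟨ha, hb, _⟩ := attNx_spec g hPU hsA h2 hown
          exact ⟨hA1U ha, hb⟩
    have hwinA : ∀ s ∈ U, WinsFor A iP U nxA s := by
      intro s hs π hπ h0 hcons
      by_cases hio : ∀ N, ∃ k ≥ N, π k ∈ A1
      · have hnx : ∀ s', s' ∈ A1 → s' ∉ P → A.own s' = iP →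
            nxA s' ∈ A1 ∧ rank A iP U P (nxA s') < rank A iP U P s' := by
          intro s' h1 h2 h3
          have hs'U1 : s' ∉ U1 := fun hc => (Finset.mem_sdiff.mp hc).2 h1
          rw [hnxAe _, if_neg hs'U1]
          obtain ⟨ha, _, hc⟩ := attNx_spec g hPU h1 h2 h3
          exact ⟨ha, hc⟩
        have hreach := attr_reach hPU hπ hcons hnx
        have hPio : ∀ N', ∃ k ≥ N', π k ∈ ({x | x ∈ P} : Set S) := by
          intro N'
          obtain ⟨k, hk, hkA⟩ := hio N'
          obtain ⟨k', hk', hkP⟩ := hreach k hkA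
          exact ⟨k', le_trans hk hk', hkP⟩
        obtain ⟨a, haP, haI⟩ := exists_infOcc_of_frequently π {x | x ∈ P} hPio
        have hle : maxPr A π ≤ p := maxPr_le (fun b hb => hprle b (infOcc_mem_U hπ hb))
        have hge : p ≤ maxPr A π := by
          have h2 := le_maxPr (A := A) haI
          rw [hprP a haP] at h2
          exact h2
        have hmax : maxPr A π = p := le_antisymm hle hge
        show Even (maxPr A π) ↔ iP = true
        rw [hmax]
        exact hiP
      · push_neg at hio
        obtain ⟨N, hN⟩ := hio
        have hmem1 : ∀ k, π (k + N) ∈ U1 := fun k =>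
          Finset.mem_sdiff.mpr ⟨(hπ (k+N)).1, hN (k+N) (by omega)⟩
        have hτplay : IsPlay A U1 (fun k => π (k + N)) := fun k =>
          ⟨hmem1 k, (isPlay_shift hπ N k).2⟩
        have hτcons : ConsW A iP (nx' iP) (fun k => π (k + N)) := by
          intro k hk
          have h1 := consW_shift hcons N k hk
          refine h1.trans ?_
          show nxA (π (k + N)) = nx' iP (π (k + N))
          rw [hnxAe _, if_pos (hmem1 k)]
        have h2 := hWempty (π N) (by simpa using hmem1 0) _ hτplay (by simp) hτcons
        unfold WinCond at h2 ⊢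
        rwa [maxPr_shift] at h2
    refine ⟨fun j => if j = iP then nxA else g, ?_, ?_⟩
    · intro i
      by_cases hieq : i = iP
      · subst hieq
        show ValidOn A iP U (if iP = iP then nxA else g)
        rw [if_pos rfl]
        exact hvalA
      · have hieq' : i = !iP := bool_resolve hieq
        subst hieq'
        show ValidOn A (!iP) U (if (!iP) = iP then nxA else g)
        rw [if_neg (bool_not_ne iP)]
        exact hval_g _
    · intro s hs
      refine ⟨iP, ?_⟩
      show WinsFor A iP U (if iP = iP then nxA else g) s
      rw [if_pos rfl]
      exact hwinA s hs

end Parity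
section ListLemmas
variable {α : Type} [DecidableEq α]

lemma indexOf_lt_of_mem_take : ∀ (l : List α) (z : ℕ) (s : α), s ∈ l.take z →
    l.idxOf s < z := by
  intro l
  induction l with
  | nil => intro z s h; simp at h
  | cons a l ih =>
    intro z s h
    cases z with
    | zero => simp at h
    | succ z =>
      rw [List.take_succ_cons] at h
      by_cases hs : s = a
      · subst hs; rw [List.idxOf_cons_self]; omega
      · have hmem : s ∈ l.take z := by
          rcases List.mem_cons.mp h with h' | h'
          · exact absurd h' hs
          · exact h'
        have h2 := ih z s hmem
        rw [List.idxOf_cons_ne _ (fun he => hs he.symm)]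
        omega

lemma mtf_take_toFinset : ∀ (l : List α) (z : ℕ) (s : α), s ∈ l.take z →
    ((s :: l.erase s).take z).toFinset = (l.take z).toFinset := by
  intro l
  induction l with
  | nil => intro z s h; simp at h
  | cons a l ih =>
    intro z s h
    cases z with
    | zero => simp at h
    | succ z =>
      rw [List.take_succ_cons] at h
      by_cases hs : s = a
      · subst hs
        rw [List.erase_cons_head]
      · have hmem : s ∈ l.take z := by
          rcases List.mem_cons.mp h with h' | h'
          · exact absurd h' hs
          · exact h'
        have hz1 : z ≠ 0 := by
          intro hz; rw [hz] at hmem; simp at hmem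
        obtain ⟨z', rfl⟩ : ∃ z', z = z' + 1 := ⟨z - 1, by omega⟩
        rw [List.erase_cons_tail (by simp only [beq_iff_eq]; exact fun he => hs he.symm)]
        rw [List.take_succ_cons, List.take_succ_cons, List.take_succ_cons]
        rw [List.toFinset_cons, List.toFinset_cons, List.toFinset_cons]
        have ihz := ih (z' + 1) s hmem
        rw [List.take_succ_cons, List.toFinset_cons] at ihz
        rw [← ihz]
        exact Finset.insert_comm _ _ _

lemma take_erase_of_not_mem_take : ∀ (l : List α) (z : ℕ) (s : α), s ∉ l.take z →
    (l.erase s).take z = l.take z := by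
  intro l
  induction l with
  | nil => intro z s _; simp
  | cons a l ih =>
    intro z s h
    cases z with
    | zero => simp
    | succ z =>
      rw [List.take_succ_cons] at h
      have hs : s ≠ a := fun he => h (by rw [he]; exact List.mem_cons_self)
      have hns : s ∉ l.take z := fun hc => h (List.mem_cons_of_mem _ hc)
      rw [List.erase_cons_tail (by simp only [beq_iff_eq]; exact fun he => hs he.symm)]
      rw [List.take_succ_cons, List.take_succ_cons, ih z s hns]

lemma getElem?_mtf : ∀ (l : List α) (s : α) (j : ℕ), l.idxOf s < j →
    (s :: l.erase s)[j]? = l[j]? := by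
  intro l
  induction l with
  | nil =>
    intro s j h
    simp only [List.idxOf_nil] at h
    obtain ⟨j', rfl⟩ : ∃ j', j = j' + 1 := ⟨j - 1, by omega⟩
    simp
  | cons a l ih =>
    intro s j h
    by_cases hs : s = a
    · subst hs
      rw [List.erase_cons_head]
    · rw [List.idxOf_cons_ne _ (fun he => hs he.symm)] at h
      obtain ⟨j', rfl⟩ : ∃ j', j = j' + 1 := ⟨j - 1, by omega⟩
      have hlt : l.idxOf s < j' := by omega
      obtain ⟨j'', rfl⟩ : ∃ j'', j' = j'' + 1 := ⟨j' - 1, by omega⟩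
      rw [List.erase_cons_tail (by simp only [beq_iff_eq]; exact fun he => hs he.symm)]
      have ihj := ih s (j'' + 1) hlt
      rw [List.getElem?_cons_succ, List.getElem?_cons_succ, List.getElem?_cons_succ]
      rw [List.getElem?_cons_succ] at ihj
      exact ihj

lemma indexOf_of_getElem? : ∀ (l : List α), l.Nodup → ∀ (j : ℕ) (z : α),
    l[j]? = some z → l.idxOf z = j := by
  intro l
  induction l with
  | nil => intro _ j z h; simp at h
  | cons a l ih =>
    intro hnd j z h
    cases j with
    | zero =>
      rw [List.getElem?_cons_zero] at h
      have : a = z := by injection h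
      subst this
      exact List.idxOf_cons_self
    | succ j =>
      rw [List.getElem?_cons_succ] at h
      have hzl : z ∈ l := List.mem_of_getElem? h
      have hanl : a ∉ l := (List.nodup_cons.mp hnd).1
      have hne : a ≠ z := fun he => hanl (he ▸ hzl)
      rw [List.idxOf_cons_ne _ hne, ih (List.nodup_cons.mp hnd).2 j z h]

lemma nodup_mtf {l : List α} (h : l.Nodup) (s : α) : (s :: l.erase s).Nodup :=
  List.nodup_cons.mpr
    ⟨fun hc => ((List.Nodup.mem_erase_iff h).mp hc).1 rfl, h.erase s⟩

lemma ico_succ_insert {a b : ℕ} (h : a ≤ b) :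
    Finset.Ico a (b+1) = insert b (Finset.Ico a b) := by
  ext x
  simp [Finset.mem_Ico, Finset.mem_insert]
  omega

end ListLemmas

section LAR
variable {S : Type} [Fintype S] [DecidableEq S]

noncomputable instance fintypeNodupList : Fintype {l : List S // l.Nodup} := by
  apply Fintype.ofInjective
    (f := fun (l : {l : List S // l.Nodup}) (i : Fin (Fintype.card S + 1)) => l.1[(i : ℕ)]?)
  intro l1 l2 h
  apply Subtype.ext
  apply List.ext_getElem?
  intro n
  by_cases hn : n < Fintype.card S + 1
  · exact congrFun h ⟨n, hn⟩
  · rw [List.getElem?_eq_none, List.getElem?_eq_none]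
    · have := l2.2.length_le_card; omega
    · have := l1.2.length_le_card; omega

def MLAR (S : Type) [Fintype S] [DecidableEq S] : Type :=
  {l : List S // l.Nodup} × Fin (Fintype.card S + 1)

noncomputable instance : Fintype (MLAR S) := by
  unfold MLAR; infer_instance

noncomputable def larUpd : MLAR S → S → MLAR S := fun m s =>
  (⟨s :: m.1.1.erase s, nodup_mtf m.1.2 s⟩,
    ⟨m.1.1.idxOf s, by
      have h1 : m.1.1.idxOf s ≤ m.1.1.length := List.idxOf_le_length
      have h2 := m.1.2.length_le_card
      omega⟩)

def memSeq {M α : Type} (upd : M → α → M) (m : M) (π : ℕ → α) : ℕ → M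
  | 0 => m
  | k + 1 => upd (memSeq upd m π k) (π k)

open Classical in
noncomputable def larPr (F : Set (Set S)) : S × MLAR S → ℕ := fun x =>
  if {a | a ∈ x.2.1.1.take ((x.2.2 : ℕ) + 1)} ∈ F then 2 * (x.2.2 : ℕ) + 2
  else 2 * (x.2.2 : ℕ) + 1

/-- The key LAR lemma: along any sequence, the maximal priority occurring infinitely
often in the LAR-annotated sequence is even iff the set of states visited infinitely
often belongs to `F`. -/
lemma lar_main (F : Set (Set S)) (A' : PArena (S × MLAR S)) (hpr : A'.pr = larPr F)
    (π : ℕ → S) (m : MLAR S) :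
    Even (maxPr A' (fun k => (π k, memSeq larUpd m π (k+1)))) ↔ InfOcc π ∈ F := by
  classical
  set x : ℕ → S × MLAR S := fun k => (π k, memSeq larUpd m π (k+1)) with hx
  set L : ℕ → List S := fun k => (memSeq larUpd m π k).1.1 with hLdef
  have hLnd : ∀ k, (L k).Nodup := fun k => (memSeq larUpd m π k).1.2
  have hLs : ∀ k, L (k+1) = π k :: (L k).erase (π k) := fun k => rfl
  have hprx : ∀ k, A'.pr (x k) =
      (if {a | a ∈ (L (k+1)).take ((L k).idxOf (π k) + 1)} ∈ F
        then 2 * ((L k).idxOf (π k)) + 2 else 2 * ((L k).idxOf (π k)) + 1) := by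
    intro k
    rw [hpr]
    rfl
  set If : Finset S := Finset.univ.filter (fun a => a ∈ InfOcc π) with hIfdef
  have hIfI : ∀ a, a ∈ If ↔ a ∈ InfOcc π := by
    intro a; rw [hIfdef]; simp
  set r := If.card with hrdef
  obtain ⟨T0, hT0⟩ := eventually_infOcc π
  obtain ⟨T1, hT01, hT1⟩ := exists_window π T0
  have hX : ∀ k, T0 ≤ k → (((L k).take ((Finset.Ico T0 k).image π).card).toFinset
      = (Finset.Ico T0 k).image π) := by
    intro k hk
    induction k, hk using Nat.le_induction with
    | base => simp
    | succ k hk ihk =>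
      have himg : (Finset.Ico T0 (k+1)).image π = insert (π k) ((Finset.Ico T0 k).image π) := by
        rw [ico_succ_insert hk, Finset.image_insert]
      rw [himg, hLs k]
      by_cases hmem : π k ∈ (Finset.Ico T0 k).image π
      · rw [Finset.insert_eq_self.mpr hmem]
        have hmemtake : π k ∈ (L k).take ((Finset.Ico T0 k).image π).card := by
          rw [← List.mem_toFinset, ihk]; exact hmem
        rw [mtf_take_toFinset _ _ _ hmemtake]
        exact ihk
      · rw [Finset.card_insert_of_notMem hmem]
        have hnot : π k ∉ (L k).take ((Finset.Ico T0 k).image π).card := by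
          intro hc
          exact hmem (ihk ▸ List.mem_toFinset.mpr hc)
        rw [List.take_succ_cons, List.toFinset_cons,
          take_erase_of_not_mem_take _ _ _ hnot, ihk]
  have hXIf : ∀ k, T1 ≤ k → (Finset.Ico T0 k).image π = If := by
    intro k hk
    apply Finset.Subset.antisymm
    · intro a ha
      obtain ⟨j, hj, he⟩ := Finset.mem_image.mp ha
      rw [hIfI, ← he]
      exact hT0 j (Finset.mem_Ico.mp hj).1
    · intro a ha
      obtain ⟨j, hj1, hj2, he⟩ := hT1 a ((hIfI a).mp ha)
      exact Finset.mem_image.mpr ⟨j, Finset.mem_Ico.mpr ⟨hj1, by omega⟩, he⟩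
  have hK1 : ∀ k, T1 ≤ k → ((L k).take r).toFinset = If := by
    intro k hk
    have h1 := hX k (le_trans hT01 hk)
    rw [hXIf k hk] at h1
    exact h1
  have hrne : If.Nonempty := by
    obtain ⟨a, ha⟩ := infOcc_nonempty π
    exact ⟨a, (hIfI a).mpr ha⟩
  have hr1 : 1 ≤ r := Finset.card_pos.mpr hrne
  have hK2 : ∀ k, T1 ≤ k → (L k).idxOf (π k) < r := by
    intro k hk
    apply indexOf_lt_of_mem_take
    rw [← List.mem_toFinset, hK1 k hk, hIfI]
    exact hT0 k (le_trans hT01 hk)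
  have hpr_top : ∀ k, T1 ≤ k → (L k).idxOf (π k) = r - 1 →
      A'.pr (x k) = (if InfOcc π ∈ F then 2 * r else 2 * r - 1) := by
    intro k hk hidx
    have hmemtake : π k ∈ (L k).take r := by
      rw [← List.mem_toFinset, hK1 k hk, hIfI]
      exact hT0 k (le_trans hT01 hk)
    have hset : {a | a ∈ (L (k+1)).take ((L k).idxOf (π k) + 1)} = InfOcc π := by
      rw [hidx]
      have hreq : r - 1 + 1 = r := by omega
      rw [hreq]
      calc {a | a ∈ (L (k+1)).take r} = ↑((L (k+1)).take r).toFinset :=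
            (List.coe_toFinset _).symm
        _ = ↑((L k).take r).toFinset := by rw [hLs k, mtf_take_toFinset _ _ _ hmemtake]
        _ = InfOcc π := by
            rw [hK1 k hk]
            ext a
            rw [Finset.mem_coe, hIfI]
    rw [hprx k, hset]
    by_cases hF : InfOcc π ∈ F
    · rw [if_pos hF, if_pos hF, hidx]; omega
    · rw [if_neg hF, if_neg hF, hidx]; omega
  have hK3 : ∀ k, T1 ≤ k → ∃ k', k ≤ k' ∧ T1 ≤ k' ∧ (L k').idxOf (π k') = r - 1 := by
    intro k hk
    by_contra hc
    push_neg at hc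
    have hlow : ∀ k', k ≤ k' → (L k').idxOf (π k') < r - 1 := by
      intro k' hk'
      have h1 := hK2 k' (le_trans hk hk')
      have h2 := hc k' hk' (le_trans hk hk')
      omega
    have hfix : ∀ k', k ≤ k' → (L k')[r-1]? = (L k)[r-1]? := by
      intro k' hk'
      induction k', hk' using Nat.le_induction with
      | base => rfl
      | succ k' hk' ihk =>
        rw [hLs k', getElem?_mtf _ _ _ (hlow k' hk'), ihk]
    have hlen : r ≤ (L k).length := by
      have h1 := hK1 k hk
      have h2 : ((L k).take r).toFinset.card = r := by rw [h1]
      have h3 := List.toFinset_card_le ((L k).take r)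
      have h4 := List.length_take (i := r) (l := L k)
      omega
    obtain ⟨z, hz⟩ : ∃ z, (L k)[r-1]? = some z := by
      have hlt : r - 1 < (L k).length := by omega
      exact ⟨(L k)[r-1], List.getElem?_eq_getElem hlt⟩
    have hzI : z ∈ InfOcc π := by
      have hzmem : z ∈ (L k).take r := by
        apply List.mem_of_getElem? (i := r - 1)
        rw [List.getElem?_take]
        rw [if_pos (by omega)]
        exact hz
      rw [← hIfI, ← hK1 k hk]
      exact List.mem_toFinset.mpr hzmem
    obtain ⟨k', hk', hπk'⟩ := hzI k
    have hfix' := hfix k' hk'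
    rw [hz] at hfix'
    have hidx : (L k').idxOf z = r - 1 := indexOf_of_getElem? _ (hLnd k') _ _ hfix'
    have hlow' := hlow k' hk'
    rw [hπk'] at hlow'
    omega
  by_cases hF : InfOcc π ∈ F
  · have hub : ∀ y ∈ InfOcc x, A'.pr y ≤ 2 * r := by
      intro y hy
      obtain ⟨k, hk, he⟩ := hy T1
      rw [← he, hprx k]
      have h1 := hK2 k hk
      split <;> omega
    have hfreq : ∀ N, ∃ k ≥ N, x k ∈ {y | A'.pr y = 2 * r} := by
      intro N
      obtain ⟨k', h1, h2, h3⟩ := hK3 (max N T1) (le_max_right _ _)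
      refine ⟨k', le_trans (le_max_left _ _) h1, ?_⟩
      show A'.pr (x k') = 2 * r
      rw [hpr_top k' h2 h3, if_pos hF]
    obtain ⟨y, hy1, hy2⟩ := exists_infOcc_of_frequently x _ hfreq
    have hmax : maxPr A' x = 2 * r := by
      apply le_antisymm (maxPr_le hub)
      have h2 := le_maxPr (A := A') hy2
      rw [hy1] at h2
      exact h2
    rw [hmax]
    constructor
    · intro _; exact hF
    · intro _; exact ⟨r, by omega⟩
  · have hub : ∀ y ∈ InfOcc x, A'.pr y ≤ 2 * r - 1 := by
      intro y hy
      obtain ⟨k, hk, he⟩ := hy T1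
      by_cases hidx : (L k).idxOf (π k) = r - 1
      · rw [← he, hpr_top k hk hidx]
        simp [hF]
      · rw [← he, hprx k]
        have h1 := hK2 k hk
        split <;> omega
    have hfreq : ∀ N, ∃ k ≥ N, x k ∈ {y | A'.pr y = 2 * r - 1} := by
      intro N
      obtain ⟨k', h1, h2, h3⟩ := hK3 (max N T1) (le_max_right _ _)
      refine ⟨k', le_trans (le_max_left _ _) h1, ?_⟩
      show A'.pr (x k') = 2 * r - 1
      rw [hpr_top k' h2 h3, if_neg hF]
    obtain ⟨y, hy1, hy2⟩ := exists_infOcc_of_frequently x _ hfreq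
    have hmax : maxPr A' x = 2 * r - 1 := by
      apply le_antisymm (maxPr_le hub)
      have h2 := le_maxPr (A := A') hy2
      rw [hy1] at h2
      exact h2
    rw [hmax]
    constructor
    · intro hEv
      exfalso
      obtain ⟨w, hw⟩ := hEv
      omega
    · intro hI; exact absurd hI hF

end LAR

section MullerThm
variable {S : Type} [Fintype S] [DecidableEq S]

/-- Finite-memory determinacy of finite Muller games, uniformly over positions and
initial memory contents. -/
theorem mullerFM (P1 : Set S) (R : S → S → Prop) (U : Finset S)
    (htot : ∀ s ∈ U, ∃ t ∈ U, R s t) (F : Set (Set S)) :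
    ∃ (nx1 nx2 : MLAR S → S → S),
      (∀ m, ∀ s ∈ U, s ∈ P1 → nx1 m s ∈ U ∧ R s (nx1 m s)) ∧
      (∀ m, ∀ s ∈ U, s ∉ P1 → nx2 m s ∈ U ∧ R s (nx2 m s)) ∧
      ∀ s ∈ U, ∀ m : MLAR S,
        (∀ π : ℕ → S, π 0 = s → (∀ k, π k ∈ U) → (∀ k, R (π k) (π (k+1))) →
          (∀ k, π k ∈ P1 → π (k+1) = nx1 (memSeq larUpd m π k) (π k)) → InfOcc π ∈ F) ∨
        (∀ π : ℕ → S, π 0 = s → (∀ k, π k ∈ U) → (∀ k, R (π k) (π (k+1))) →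
          (∀ k, π k ∉ P1 → π (k+1) = nx2 (memSeq larUpd m π k) (π k)) → InfOcc π ∉ F) := by
  classical
  set A' : PArena (S × MLAR S) :=
    ⟨fun y => decide (y.1 ∈ P1), fun y z => R y.1 z.1 ∧ z.2 = larUpd y.2 z.1, larPr F⟩
    with hA'
  set U' : Finset (S × MLAR S) := Finset.univ.filter (fun y => y.1 ∈ U) with hU'
  have hU'mem : ∀ y : S × MLAR S, y ∈ U' ↔ y.1 ∈ U := by
    intro y; rw [hU']; simp
  have htot' : Tot A' U' := by
    intro y hy
    obtain ⟨t, ht, hR⟩ := htot y.1 ((hU'mem y).mp hy)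
    exact ⟨(t, larUpd y.2 t), (hU'mem _).mpr ht, hR, rfl⟩
  obtain ⟨nx, hval, hwin⟩ := parityDet A' U' htot'
  refine ⟨fun m s => (nx true (s, larUpd m s)).1,
    fun m s => (nx false (s, larUpd m s)).1, ?_, ?_, ?_⟩
  · intro m s hs hP
    have hX : ((s, larUpd m s) : S × MLAR S) ∈ U' := (hU'mem _).mpr hs
    have hown : A'.own (s, larUpd m s) = true := by
      show decide (s ∈ P1) = true
      exact decide_eq_true hP
    have h := hval true _ hX hown
    exact ⟨(hU'mem _).mp h.1, h.2.1⟩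
  · intro m s hs hP
    have hX : ((s, larUpd m s) : S × MLAR S) ∈ U' := (hU'mem _).mpr hs
    have hown : A'.own (s, larUpd m s) = false := by
      show decide (s ∈ P1) = false
      exact decide_eq_false hP
    have h := hval false _ hX hown
    exact ⟨(hU'mem _).mp h.1, h.2.1⟩
  · intro s hs m
    have hX0 : ((s, larUpd m s) : S × MLAR S) ∈ U' := (hU'mem _).mpr hs
    obtain ⟨i, hi⟩ := hwin _ hX0
    cases i with
    | true =>
      left
      intro π h0 hU hR hcons
      set xseq : ℕ → S × MLAR S := fun k => (π k, memSeq larUpd m π (k+1)) with hxseq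
      have hplay : IsPlay A' U' xseq := by
        intro k
        exact ⟨(hU'mem _).mpr (hU k), hR k, rfl⟩
      have hx0 : xseq 0 = (s, larUpd m s) := by
        show (π 0, larUpd m (π 0)) = (s, larUpd m s)
        rw [h0]
      have hconsW : ConsW A' true (nx true) xseq := by
        intro k hk
        have hP1 : π k ∈ P1 := of_decide_eq_true hk
        have hfst : π (k+1) = (nx true (xseq k)).1 := hcons k hP1
        have hXk : xseq k ∈ U' := (hU'mem _).mpr (hU k)
        have hvalk := hval true _ hXk hk
        have hsnd : (nx true (xseq k)).2 = larUpd (xseq k).2 ((nx true (xseq k)).1) :=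
          hvalk.2.2
        have h2 : (xseq (k+1)).2 = (nx true (xseq k)).2 := by
          rw [hsnd, ← hfst]
          rfl
        exact Prod.ext hfst h2
      have hwc := hi xseq hplay hx0 hconsW
      have hEv : Even (maxPr A' xseq) := hwc.mpr rfl
      exact (lar_main F A' rfl π m).mp hEv
    | false =>
      right
      intro π h0 hU hR hcons
      set xseq : ℕ → S × MLAR S := fun k => (π k, memSeq larUpd m π (k+1)) with hxseq
      have hplay : IsPlay A' U' xseq := by
        intro k
        exact ⟨(hU'mem _).mpr (hU k), hR k, rfl⟩
      have hx0 : xseq 0 = (s, larUpd m s) := by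
        show (π 0, larUpd m (π 0)) = (s, larUpd m s)
        rw [h0]
      have hconsW : ConsW A' false (nx false) xseq := by
        intro k hk
        have hP1 : π k ∉ P1 := of_decide_eq_false hk
        have hfst : π (k+1) = (nx false (xseq k)).1 := hcons k hP1
        have hXk : xseq k ∈ U' := (hU'mem _).mpr (hU k)
        have hvalk := hval false _ hXk hk
        have hsnd : (nx false (xseq k)).2 = larUpd (xseq k).2 ((nx false (xseq k)).1) :=
          hvalk.2.2
        have h2 : (xseq (k+1)).2 = (nx false (xseq k)).2 := by
          rw [hsnd, ← hfst]
          rfl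
        exact Prod.ext hfst h2
      have hwc := hi xseq hplay hx0 hconsW
      intro hIF
      have hEv : Even (maxPr A' xseq) := (lar_main F A' rfl π m).mpr hIF
      exact absurd (hwc.mp hEv) (by simp)

end MullerThm

section Energy

def enStep1 (bj : ℕ) (q : Option (Fin (bj+1))) (d : ℤ) : Option (Fin (bj+1)) :=
  q.bind (fun e =>
    if h : 0 ≤ ((e : ℕ) : ℤ) + d then
      some ⟨(min (((e : ℕ) : ℤ) + d) (bj : ℤ)).toNat, by omega⟩
    else none)

def enStep2 (bj : ℕ) (q : Option (Fin (bj+1))) (d : ℤ) : Option (Fin (bj+1)) :=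
  q.bind (fun e =>
    if h : 0 ≤ ((e : ℕ) : ℤ) + d ∧ ((e : ℕ) : ℤ) + d ≤ (bj : ℤ) then
      some ⟨(((e : ℕ) : ℤ) + d).toNat, by omega⟩
    else none)

def zero1 (bj : ℕ) : Option (Fin (bj + 1)) := some ⟨0, by omega⟩

lemma memSeq_absorb {γ : Type} (f : Option γ → ℤ → Option γ)
    (hf : ∀ d, f none d = none) (q0 : Option γ) (d : ℕ → ℤ) {k : ℕ}
    (h : memSeq f q0 d k = none) : ∀ l, k ≤ l → memSeq f q0 d l = none := by
  intro l hl
  induction l, hl using Nat.le_induction with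
  | base => exact h
  | succ l hl ih =>
    show f (memSeq f q0 d l) (d l) = none
    rw [ih, hf]

lemma battery_mem (bj : ℕ) (d : ℕ → ℤ) (k : ℕ)
    (h : ∀ i, i < k → 0 ≤ batteryLevel d (bj : ℤ) i + d i) :
    ∃ e : Fin (bj + 1), memSeq (enStep1 bj) (zero1 bj) d k = some e ∧
      ((e : ℕ) : ℤ) = batteryLevel d (bj : ℤ) k := by
  induction k with
  | zero => exact ⟨⟨0, by omega⟩, rfl, rfl⟩
  | succ k ih =>
    obtain ⟨e, he, hev⟩ := ih (fun i hi => h i (by omega))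
    have hcheck : 0 ≤ ((e : ℕ) : ℤ) + d k := by rw [hev]; exact h k (by omega)
    refine ⟨⟨(min (((e : ℕ) : ℤ) + d k) (bj : ℤ)).toNat, by omega⟩, ?_, ?_⟩
    · show enStep1 bj (memSeq (enStep1 bj) (zero1 bj) d k) (d k) = _
      rw [he]
      simp only [enStep1, Option.bind_some]
      rw [dif_pos hcheck]
    · show ((min (((e : ℕ) : ℤ) + d k) (bj : ℤ)).toNat : ℤ)
        = min (batteryLevel d (bj : ℤ) k + d k) (bj : ℤ)
      rw [← hev]
      omega

lemma battery_iff (bj : ℕ) (d : ℕ → ℤ) :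
    (∀ k, memSeq (enStep1 bj) (zero1 bj) d k ≠ none) ↔
      (∀ k, 0 ≤ batteryLevel d (bj : ℤ) k + d k) := by
  constructor
  · intro h k
    induction k using Nat.strong_induction_on with
    | _ k ih =>
      obtain ⟨e, he, hev⟩ := battery_mem bj d k ih
      by_contra hc
      apply h (k+1)
      show enStep1 bj (memSeq (enStep1 bj) (zero1 bj) d k) (d k) = none
      rw [he]
      simp only [enStep1, Option.bind_some]
      rw [dif_neg (by rw [hev]; exact hc)]
  · intro h k
    obtain ⟨e, he, _⟩ := battery_mem bj d k (fun i _ => h i)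
    rw [he]
    simp

lemma spill_mem (bj : ℕ) (d : ℕ → ℤ) (k : ℕ)
    (h : ∀ i, i ≤ k → 0 ≤ (∑ x ∈ Finset.range i, d x) ∧
      (∑ x ∈ Finset.range i, d x) ≤ (bj : ℤ)) :
    ∃ e : Fin (bj + 1), memSeq (enStep2 bj) (zero1 bj) d k = some e ∧
      ((e : ℕ) : ℤ) = ∑ x ∈ Finset.range k, d x := by
  induction k with
  | zero => exact ⟨⟨0, by omega⟩, rfl, by simp⟩
  | succ k ih =>
    obtain ⟨e, he, hev⟩ := ih (fun i hi => h i (by omega))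
    have hck := h (k+1) (le_refl _)
    rw [Finset.sum_range_succ] at hck
    have hcheck : 0 ≤ ((e : ℕ) : ℤ) + d k ∧ ((e : ℕ) : ℤ) + d k ≤ (bj : ℤ) := by
      rw [hev]; exact hck
    refine ⟨⟨(((e : ℕ) : ℤ) + d k).toNat, by omega⟩, ?_, ?_⟩
    · show enStep2 bj (memSeq (enStep2 bj) (zero1 bj) d k) (d k) = _
      rw [he]
      simp only [enStep2, Option.bind_some]
      rw [dif_pos hcheck]
    · show ((((e : ℕ) : ℤ) + d k).toNat : ℤ) = ∑ x ∈ Finset.range (k+1), d x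
      rw [Finset.sum_range_succ, ← hev]
      omega

lemma spill_iff (bj : ℕ) (d : ℕ → ℤ) :
    (∀ k, memSeq (enStep2 bj) (zero1 bj) d k ≠ none) ↔
      (∀ k, 0 ≤ (∑ x ∈ Finset.range k, d x) ∧
        (∑ x ∈ Finset.range k, d x) ≤ (bj : ℤ)) := by
  constructor
  · intro h k
    induction k using Nat.strong_induction_on with
    | _ k ih =>
      cases k with
      | zero => constructor <;> simp
      | succ k =>
        obtain ⟨e, he, hev⟩ := spill_mem bj d k (fun i hi => ih i (by omega))
        by_contra hc
        apply h (k+1)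
        show enStep2 bj (memSeq (enStep2 bj) (zero1 bj) d k) (d k) = none
        rw [he]
        simp only [enStep2, Option.bind_some]
        rw [dif_neg (by
          intro hcon
          apply hc
          rw [Finset.sum_range_succ, ← hev]
          exact hcon)]
  · intro h k
    obtain ⟨e, he, _⟩ := spill_mem bj d k (fun i _ => h i)
    rw [he]
    simp

section EnM
variable (n m : ℕ) (b : Fin (n+m) → ℕ)

def QEn : Type := ∀ j : Fin (n+m), Option (Fin (b j + 1))

noncomputable instance : Fintype (QEn n m b) := by unfold QEn; infer_instance

noncomputable def enStepAt (j : Fin (n+m)) :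
    Option (Fin (b j + 1)) → ℤ → Option (Fin (b j + 1)) :=
  if (j : ℕ) < n then enStep1 (b j) else enStep2 (b j)

noncomputable def enUpd (q : QEn n m b) (dv : Fin (n+m) → ℤ) : QEn n m b :=
  fun j => enStepAt n m b j (q j) (dv j)

def enQ0 : QEn n m b := fun j => zero1 (b j)

lemma enStepAt_none (j : Fin (n+m)) (d : ℤ) : enStepAt n m b j none d = none := by
  unfold enStepAt
  split <;> rfl

lemma run_coord {C : Type} (read : C → Fin (n+m) → ℤ) (ρ : ℕ → C) (j : Fin (n+m)) :
    ∀ k, ((seqPrefix ρ k).foldl (fun q c => enUpd n m b q (read c)) (enQ0 n m b)) j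
      = memSeq (enStepAt n m b j) (zero1 (b j)) (fun i => read (ρ i) j) k := by
  intro k
  induction k with
  | zero => rfl
  | succ k ih =>
    have hsp : seqPrefix ρ (k+1) = seqPrefix ρ k ++ [ρ k] := by
      unfold seqPrefix
      rw [List.range_succ, List.map_append]
      rfl
    rw [hsp, List.foldl_append]
    show enStepAt n m b j
      (((seqPrefix ρ k).foldl (fun q c => enUpd n m b q (read c)) (enQ0 n m b)) j)
      (read (ρ k) j) = _
    rw [ih]
    rfl

end EnM

lemma foldl_fst {C N1 N2 : Type} (f1 : N1 → C → N1) (f2 : (N1 × N2) → C → N2) :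
    ∀ (w : List C) (acc : N1 × N2),
      (w.foldl (fun a c => (f1 a.1 c, f2 a c)) acc).1 = w.foldl f1 acc.1 := by
  intro w
  induction w with
  | nil => intro acc; rfl
  | cons c w ih => intro acc; exact ih _


lemma run_coord_pair {C N2 : Type} (n m : ℕ) (b : Fin (n+m) → ℕ)
    (read : C → (Fin (n+m) → ℤ)) (f2 : (QEn n m b × N2) → C → N2) (m2 : N2)
    (ρ : ℕ → C) (j : Fin (n+m)) (t : ℕ) :
    ((seqPrefix ρ t).foldl (fun a c => (enUpd n m b a.1 (read c), f2 a c))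
        (enQ0 n m b, m2)).1 j
      = memSeq (enStepAt n m b j) (zero1 (b j)) (fun i => read (ρ i) j) t := by
  rw [foldl_fst (fun q c => enUpd n m b q (read c)) f2]
  exact run_coord n m b read ρ j t

lemma seqPrefix_succ' {C : Type} (ρ : ℕ → C) (t : ℕ) :
    seqPrefix ρ (t+1) = seqPrefix ρ t ++ [ρ t] := by
  unfold seqPrefix
  rw [List.range_succ, List.map_append]
  rfl

end Energy

end SPEAux

/-- multi-dimension bounded-energy Muller games have finite-memory SPE. -/
theorem stmt8 {V : Type} [Fintype V] (n m p : ℕ)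
    (O : Arena V (V × (Fin (n + m) → ℤ))) (hwf : O.WF)
    (weight : V → Fin (n + m) → ℤ) (hΓ : ∀ v : V, O.Γ v = (v, weight v))
    (U : Fin p → Set V) (b : Fin (n + m) → ℕ)
    (φ : (Fin p → Prop) → (Fin n → Prop) → (Fin m → Prop) → Prop) :
    O.HasFMSPE
      {ρ | φ
        (fun i => {v : V | ∀ N : ℕ, ∃ k ≥ N, (ρ k).1 = v} = U i)
        (fun j => ∀ k : ℕ,
          0 ≤ batteryLevel (fun i => (ρ i).2 (Fin.castAdd m j)) (b (Fin.castAdd m j)) k +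
            (ρ k).2 (Fin.castAdd m j))
        (fun j => ∀ k : ℕ,
          0 ≤ (∑ i ∈ Finset.range k, (ρ i).2 (Fin.natAdd n j)) ∧
          (∑ i ∈ Finset.range k, (ρ i).2 (Fin.natAdd n j)) ≤ (b (Fin.natAdd n j) : ℤ))} := by
  classical
  letI : DecidableEq V := Classical.decEq V
  letI : DecidableEq (SPEAux.QEn n m b) := Classical.decEq _
  set Wset : Set (ℕ → V × (Fin (n + m) → ℤ)) :=
    {ρ | φ
      (fun i => {v : V | ∀ N : ℕ, ∃ k ≥ N, (ρ k).1 = v} = U i)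
      (fun j => ∀ k : ℕ,
        0 ≤ batteryLevel (fun i => (ρ i).2 (Fin.castAdd m j)) (b (Fin.castAdd m j)) k +
          (ρ k).2 (Fin.castAdd m j))
      (fun j => ∀ k : ℕ,
        0 ≤ (∑ i ∈ Finset.range k, (ρ i).2 (Fin.natAdd n j)) ∧
        (∑ i ∈ Finset.range k, (ρ i).2 (Fin.natAdd n j)) ≤ (b (Fin.natAdd n j) : ℤ))}
    with hWsetdef
  set P1set : Set (V × SPEAux.QEn n m b) := {s | s.1 ∈ O.V1} with hP1setdef
  set Rq : (V × SPEAux.QEn n m b) → (V × SPEAux.QEn n m b) → Prop :=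
    fun s t => (s.1, t.1) ∈ O.E ∧ t.2 = SPEAux.enUpd n m b s.2 (O.Γ s.1).2 with hRqdef
  set UF : Finset (V × SPEAux.QEn n m b) :=
    Finset.univ.filter (fun s => s.1 ∈ O.vertices) with hUFdef
  have hUFmem : ∀ s : V × SPEAux.QEn n m b, s ∈ UF ↔ s.1 ∈ O.vertices := by
    intro s; rw [hUFdef]; simp
  set F : Set (Set (V × SPEAux.QEn n m b)) := {T | φ
      (fun i => {v | ∃ q, (v, q) ∈ T} = U i)
      (fun j => ∀ s ∈ T, s.2 (Fin.castAdd m j) ≠ none)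
      (fun j => ∀ s ∈ T, s.2 (Fin.natAdd n j) ≠ none)} with hFdef
  have htot : ∀ s ∈ UF, ∃ t ∈ UF, Rq s t := by
    intro s hs
    obtain ⟨u, hu⟩ := hwf.2.2 s.1 ((hUFmem s).mp hs)
    exact ⟨(u, SPEAux.enUpd n m b s.2 (O.Γ s.1).2),
      (hUFmem _).mpr ((hwf.2.1 _ hu).2), hu, rfl⟩
  obtain ⟨nx1, nx2, hvx1, hvx2, hwin⟩ := SPEAux.mullerFM P1set Rq UF htot F
  set m0L : SPEAux.MLAR (V × SPEAux.QEn n m b) := (⟨[], List.nodup_nil⟩, ⟨0, by omega⟩)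
    with hm0Ldef
  set αuN : (SPEAux.QEn n m b × SPEAux.MLAR (V × SPEAux.QEn n m b)) →
      (V × (Fin (n + m) → ℤ)) →
      (SPEAux.QEn n m b × SPEAux.MLAR (V × SPEAux.QEn n m b)) :=
    fun a c => (SPEAux.enUpd n m b a.1 c.2, SPEAux.larUpd a.2 (c.1, a.1)) with hαuNdef
  set m0N : SPEAux.QEn n m b × SPEAux.MLAR (V × SPEAux.QEn n m b) :=
    (SPEAux.enQ0 n m b, m0L) with hm0Ndef
  set σ1 : List (V × (Fin (n + m) → ℤ)) → V → V :=
    fun w v => (nx1 (w.foldl αuN m0N).2 (v, (w.foldl αuN m0N).1)).1 with hσ1def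
  set σ2 : List (V × (Fin (n + m) → ℤ)) → V → V :=
    fun w v => (nx2 (w.foldl αuN m0N).2 (v, (w.foldl αuN m0N).1)).1 with hσ2def
  have hv1 : O.Valid1 σ1 := by
    intro w v hv
    have hs : ((v, (w.foldl αuN m0N).1) : V × SPEAux.QEn n m b) ∈ UF :=
      (hUFmem _).mpr (Set.mem_union_left _ hv)
    exact ((hvx1 (w.foldl αuN m0N).2 _ hs hv).2).1
  have hv2 : O.Valid2 σ2 := by
    intro w v hv
    have hs : ((v, (w.foldl αuN m0N).1) : V × SPEAux.QEn n m b) ∈ UF :=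
      (hUFmem _).mpr (Set.mem_union_right _ hv)
    have hnp : ((v, (w.foldl αuN m0N).1) : V × SPEAux.QEn n m b) ∉ P1set := by
      intro hc
      exact (Set.disjoint_left.mp hwf.1) hc hv
    exact ((hvx2 (w.foldl αuN m0N).2 _ hs hnp).2).1
  have hcomb : ∀ (σa σb : List (V × (Fin (n + m) → ℤ)) → V → V),
      O.Valid1 σa → O.Valid2 σb →
      ∀ w' v', v' ∈ O.vertices → (v', O.combine σa σb w' v') ∈ O.E := by
    intro σa σb h1 h2 w' v' hv'
    unfold Arena.combine
    by_cases hmem : v' ∈ O.V1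
    · rw [if_pos hmem]; exact h1 w' v' hmem
    · rw [if_neg hmem]
      rcases hv' with h | h
      · exact absurd h hmem
      · exact h2 w' v' h
  have hcombV1 : ∀ (σa σb : List (V × (Fin (n + m) → ℤ)) → V → V) w' v', v' ∈ O.V1 →
      O.combine σa σb w' v' = σa w' v' := by
    intro σa σb w' v' h
    unfold Arena.combine
    exact if_pos h
  have hcombV2 : ∀ (σa σb : List (V × (Fin (n + m) → ℤ)) → V → V) w' v', v' ∉ O.V1 →
      O.combine σa σb w' v' = σb w' v' := by
    intro σa σb w' v' h
    unfold Arena.combine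
    exact if_neg h
  -- The main play-correspondence construction
  have MAIN : ∀ (w : List (V × (Fin (n + m) → ℤ))) (v : V), v ∈ O.vertices →
      ∀ σO, (∀ w' v', v' ∈ O.vertices → (v', σO w' v') ∈ O.E) →
      ∃ π : ℕ → (V × SPEAux.QEn n m b),
        (π 0 = (v, (w.foldl αuN m0N).1)) ∧
        (∀ k, π k ∈ UF) ∧ (∀ k, Rq (π k) (π (k+1))) ∧
        (∀ k, (π k).1 = (O.stepSeq σO w v k).2) ∧
        (∀ k, (π k).2 = ((O.stepSeq σO w v k).1.foldl αuN m0N).1) ∧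
        (∀ k, SPEAux.memSeq SPEAux.larUpd (w.foldl αuN m0N).2 π k
            = ((O.stepSeq σO w v k).1.foldl αuN m0N).2) ∧
        (O.play σO w v ∈ Wset ↔ SPEAux.InfOcc π ∈ F) := by
    intro w v hv σO hvalO
    set vs : ℕ → V := fun k => (O.stepSeq σO w v k).2 with hvsdef
    set hsq : ℕ → List (V × (Fin (n + m) → ℤ)) := fun k => (O.stepSeq σO w v k).1
      with hhsqdef
    have hstepH : ∀ k, hsq (k+1) = hsq k ++ [O.Γ (vs k)] := fun k => rfl
    have hstepV : ∀ k, vs (k+1) = σO (hsq k) (vs k) := fun k => rfl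
    have hvert : ∀ k, vs k ∈ O.vertices := by
      intro k
      induction k with
      | zero => exact hv
      | succ k ih => exact (hwf.2.1 _ (hvalO (hsq k) (vs k) ih)).2
    set mr : ℕ → SPEAux.QEn n m b × SPEAux.MLAR (V × SPEAux.QEn n m b) :=
      fun k => (hsq k).foldl αuN m0N with hmrdef
    have hmrS : ∀ k, mr (k+1) = αuN (mr k) (O.Γ (vs k)) := by
      intro k
      show (hsq (k+1)).foldl αuN m0N = _
      rw [hstepH k, List.foldl_append]
      rfl
    set π : ℕ → V × SPEAux.QEn n m b := fun k => (vs k, (mr k).1) with hπdef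
    have hπU : ∀ k, π k ∈ UF := fun k => (hUFmem _).mpr (hvert k)
    have hπR : ∀ k, Rq (π k) (π (k+1)) := by
      intro k
      refine ⟨hvalO (hsq k) (vs k) (hvert k), ?_⟩
      show (mr (k+1)).1 = SPEAux.enUpd n m b ((mr k).1) (O.Γ (vs k)).2
      rw [hmrS k]
    have hmem2 : ∀ k, SPEAux.memSeq SPEAux.larUpd ((mr 0).2) π k = (mr k).2 := by
      intro k
      induction k with
      | zero => rfl
      | succ k ih =>
        show SPEAux.larUpd (SPEAux.memSeq SPEAux.larUpd ((mr 0).2) π k) (π k) = (mr (k+1)).2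
        rw [ih, hmrS k]
        show SPEAux.larUpd ((mr k).2) (π k)
          = SPEAux.larUpd ((mr k).2) ((O.Γ (vs k)).1, (mr k).1)
        rw [hΓ (vs k)]
    have hρ2 : ∀ k, O.play σO w v (w.length + k) = O.Γ (vs k) := by
      intro k
      unfold Arena.play
      rw [dif_neg (by omega)]
      rw [show w.length + k - w.length = k from by omega]
    have hρ1 : seqPrefix (O.play σO w v) w.length = w := by
      apply List.ext_getElem
      · simp [seqPrefix]
      · intro i h1 h2
        simp only [seqPrefix, List.getElem_map, List.getElem_range]
        unfold Arena.play
        rw [dif_pos h2]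
        rfl
    have hρpre : ∀ k, seqPrefix (O.play σO w v) (w.length + k) = hsq k := by
      intro k
      induction k with
      | zero => exact hρ1
      | succ k ih =>
        rw [show w.length + (k+1) = (w.length + k) + 1 from rfl,
          SPEAux.seqPrefix_succ', ih, hρ2 k, hstepH k]
    have hq : ∀ t (j : Fin (n + m)),
        ((seqPrefix (O.play σO w v) t).foldl αuN m0N).1 j
          = SPEAux.memSeq (SPEAux.enStepAt n m b j) (SPEAux.zero1 (b j))
              (fun i => (O.play σO w v i).2 j) t := by
      intro t j
      exact SPEAux.run_coord_pair n m b Prod.snd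
        (fun a c => SPEAux.larUpd a.2 (c.1, a.1)) m0L (O.play σO w v) j t
    have hrunπ : ∀ (j : Fin (n + m)) k,
        SPEAux.memSeq (SPEAux.enStepAt n m b j) (SPEAux.zero1 (b j))
          (fun i => (O.play σO w v i).2 j) (w.length + k) = (π k).2 j := by
      intro j k
      rw [← hq (w.length + k) j, hρpre k]
    have hcond : ∀ (j : Fin (n + m)),
        (∀ t, SPEAux.memSeq (SPEAux.enStepAt n m b j) (SPEAux.zero1 (b j))
          (fun i => (O.play σO w v i).2 j) t ≠ none)
        ↔ (∀ s ∈ SPEAux.InfOcc π, s.2 j ≠ none) := by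
      intro j
      constructor
      · intro h s hs hnone
        obtain ⟨k, _, he⟩ := hs 0
        apply h (w.length + k)
        rw [hrunπ j k, he]
        exact hnone
      · intro h t hnone
        have habs := SPEAux.memSeq_absorb _ (SPEAux.enStepAt_none n m b j) _ _ hnone
        obtain ⟨s, hsI⟩ := SPEAux.infOcc_nonempty π
        obtain ⟨k, hk, he⟩ := hsI t
        apply h s hsI
        rw [← he]
        show (π k).2 j = none
        rw [← hrunπ j k]
        exact habs _ (by omega)
    have hxiff : ∀ i : Fin p,
        {u : V | ∀ N, ∃ k ≥ N, (O.play σO w v k).1 = u}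
          = {u : V | ∃ q, (u, q) ∈ SPEAux.InfOcc π} := by
      intro i
      ext u
      constructor
      · intro hu
        have hfreq : ∀ N, ∃ k ≥ N, π k ∈ {s : V × SPEAux.QEn n m b | s.1 = u} := by
          intro N
          obtain ⟨k, hk, he⟩ := hu (w.length + N)
          refine ⟨k - w.length, by omega, ?_⟩
          show (π (k - w.length)).1 = u
          have h1 : w.length + (k - w.length) = k := by omega
          have h2 := hρ2 (k - w.length)
          rw [h1] at h2
          rw [← he, h2, hΓ]
        obtain ⟨s, hsT, hsI⟩ := SPEAux.exists_infOcc_of_frequently π _ hfreq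
        refine ⟨s.2, ?_⟩
        rw [show ((u, s.2) : V × SPEAux.QEn n m b) = s from Prod.ext hsT.symm rfl]
        exact hsI
      · rintro ⟨q, hq'⟩ N
        obtain ⟨k, hk, he⟩ := hq' N
        refine ⟨w.length + k, by omega, ?_⟩
        rw [hρ2 k, hΓ]
        exact congrArg Prod.fst he
    refine ⟨π, rfl, hπU, hπR, fun k => rfl, fun k => rfl, hmem2, ?_⟩
    show φ _ _ _ ↔ φ _ _ _
    have hA : (fun i => {u : V | ∀ N : ℕ, ∃ k ≥ N, (O.play σO w v k).1 = u} = U i)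
        = (fun i => {u : V | ∃ q, (u, q) ∈ SPEAux.InfOcc π} = U i) := by
      funext i
      rw [hxiff i]
    have hB : (fun j : Fin n => ∀ k : ℕ,
          0 ≤ batteryLevel (fun i => (O.play σO w v i).2 (Fin.castAdd m j))
            (b (Fin.castAdd m j)) k + (O.play σO w v k).2 (Fin.castAdd m j))
        = (fun j : Fin n => ∀ s ∈ SPEAux.InfOcc π, s.2 (Fin.castAdd m j) ≠ none) := by
      funext j
      apply propext
      have hjn : ((Fin.castAdd m j : Fin (n + m)) : ℕ) < n := by
        simp
      have hstep : SPEAux.enStepAt n m b (Fin.castAdd m j)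
          = SPEAux.enStep1 (b (Fin.castAdd m j)) := by
        unfold SPEAux.enStepAt
        rw [if_pos hjn]
      rw [← SPEAux.battery_iff (b (Fin.castAdd m j))
        (fun i => (O.play σO w v i).2 (Fin.castAdd m j)), ← hstep]
      exact hcond (Fin.castAdd m j)
    have hC : (fun j : Fin m => ∀ k : ℕ,
          0 ≤ (∑ i ∈ Finset.range k, (O.play σO w v i).2 (Fin.natAdd n j)) ∧
          (∑ i ∈ Finset.range k, (O.play σO w v i).2 (Fin.natAdd n j))
            ≤ (b (Fin.natAdd n j) : ℤ))
        = (fun j : Fin m => ∀ s ∈ SPEAux.InfOcc π, s.2 (Fin.natAdd n j) ≠ none) := by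
      funext j
      apply propext
      have hjn : ¬ ((Fin.natAdd n j : Fin (n + m)) : ℕ) < n := by
        simp
      have hstep : SPEAux.enStepAt n m b (Fin.natAdd n j)
          = SPEAux.enStep2 (b (Fin.natAdd n j)) := by
        unfold SPEAux.enStepAt
        rw [if_neg hjn]
      rw [← SPEAux.spill_iff (b (Fin.natAdd n j))
        (fun i => (O.play σO w v i).2 (Fin.natAdd n j)), ← hstep]
      exact hcond (Fin.natAdd n j)
    rw [hA, hB, hC]
  refine ⟨σ1, σ2, ⟨hv1, hv2, ?_⟩, ?_, ?_⟩
  · -- SPE condition at every realizable (w, v)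
    intro w v hHist
    have hv : v ∈ O.vertices := by
      induction hHist with
      | base v hv => exact hv
      | step h he ih => exact (hwf.2.1 _ he).2
    have hs0U : ((v, (w.foldl αuN m0N).1) : V × SPEAux.QEn n m b) ∈ UF :=
      (hUFmem _).mpr hv
    rcases hwin _ hs0U ((w.foldl αuN m0N).2) with hW1 | hW2
    · have hall : ∀ σ2', O.Valid2 σ2' → O.play (O.combine σ1 σ2') w v ∈ Wset := by
        intro σ2' hval2'
        obtain ⟨π, hπ0, hπU, hπR, hπ1, hπ2, hπm, hπW⟩ :=
          MAIN w v hv (O.combine σ1 σ2') (hcomb σ1 σ2' hv1 hval2')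
        apply hπW.mpr
        apply hW1 π hπ0 hπU (fun k => hπR k)
        intro k hk
        have hkV1 : (O.stepSeq (O.combine σ1 σ2') w v k).2 ∈ O.V1 := by
          rw [← hπ1 k]; exact hk
        have hfst : (π (k+1)).1
            = (nx1 (SPEAux.memSeq SPEAux.larUpd (w.foldl αuN m0N).2 π k) (π k)).1 := by
          rw [hπ1 (k+1)]
          show O.combine σ1 σ2' (O.stepSeq (O.combine σ1 σ2') w v k).1
            (O.stepSeq (O.combine σ1 σ2') w v k).2 = _
          rw [hcombV1 _ _ _ _ hkV1]
          rw [hσ1def, hπm k]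
          show (nx1 (((O.stepSeq (O.combine σ1 σ2') w v k).1.foldl αuN m0N).2)
            ((O.stepSeq (O.combine σ1 σ2') w v k).2,
              ((O.stepSeq (O.combine σ1 σ2') w v k).1.foldl αuN m0N).1)).1 = _
          have hpair : ((O.stepSeq (O.combine σ1 σ2') w v k).2,
              ((O.stepSeq (O.combine σ1 σ2') w v k).1.foldl αuN m0N).1) = π k :=
            Prod.ext (hπ1 k).symm (hπ2 k).symm
          rw [hpair]
        have hsnd : (π (k+1)).2
            = (nx1 (SPEAux.memSeq SPEAux.larUpd (w.foldl αuN m0N).2 π k) (π k)).2 := by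
          have h1 := (hπR k).2
          have h2 := (hvx1 (SPEAux.memSeq SPEAux.larUpd (w.foldl αuN m0N).2 π k)
            (π k) (hπU k) hk).2.2
          rw [h1, h2]
        exact Prod.ext hfst hsnd
      exact ⟨fun _ => hall, fun hns => ((hns (hall σ2 hv2)).elim)⟩
    · have hall : ∀ σ1', O.Valid1 σ1' → O.play (O.combine σ1' σ2) w v ∉ Wset := by
        intro σ1' hval1'
        obtain ⟨π, hπ0, hπU, hπR, hπ1, hπ2, hπm, hπW⟩ :=
          MAIN w v hv (O.combine σ1' σ2) (hcomb σ1' σ2 hval1' hv2)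
        intro hmem
        apply hW2 π hπ0 hπU (fun k => hπR k) ?_ (hπW.mp hmem)
        intro k hk
        have hkV1 : (O.stepSeq (O.combine σ1' σ2) w v k).2 ∉ O.V1 := by
          rw [← hπ1 k]; exact hk
        have hfst : (π (k+1)).1
            = (nx2 (SPEAux.memSeq SPEAux.larUpd (w.foldl αuN m0N).2 π k) (π k)).1 := by
          rw [hπ1 (k+1)]
          show O.combine σ1' σ2 (O.stepSeq (O.combine σ1' σ2) w v k).1
            (O.stepSeq (O.combine σ1' σ2) w v k).2 = _
          rw [hcombV2 _ _ _ _ hkV1]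
          rw [hσ2def, hπm k]
          show (nx2 (((O.stepSeq (O.combine σ1' σ2) w v k).1.foldl αuN m0N).2)
            ((O.stepSeq (O.combine σ1' σ2) w v k).2,
              ((O.stepSeq (O.combine σ1' σ2) w v k).1.foldl αuN m0N).1)).1 = _
          have hpair : ((O.stepSeq (O.combine σ1' σ2) w v k).2,
              ((O.stepSeq (O.combine σ1' σ2) w v k).1.foldl αuN m0N).1) = π k :=
            Prod.ext (hπ1 k).symm (hπ2 k).symm
          rw [hpair]
        have hsnd : (π (k+1)).2
            = (nx2 (SPEAux.memSeq SPEAux.larUpd (w.foldl αuN m0N).2 π k) (π k)).2 := by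
          have h1 := (hπR k).2
          have h2 := (hvx2 (SPEAux.memSeq SPEAux.larUpd (w.foldl αuN m0N).2 π k)
            (π k) (hπU k) hk).2.2
          rw [h1, h2]
        exact Prod.ext hfst hsnd
      exact ⟨fun hmem => ((hall σ1 hv1 hmem).elim), fun _ => hall⟩
  · exact ⟨SPEAux.QEn n m b × SPEAux.MLAR (V × SPEAux.QEn n m b), inferInstance,
      m0N, αuN, fun a v => (nx1 a.2 (v, a.1)).1, fun w v _ => rfl⟩
  · exact ⟨SPEAux.QEn n m b × SPEAux.MLAR (V × SPEAux.QEn n m b), inferInstance,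
      m0N, αuN, fun a v => (nx2 a.2 (v, a.1)).1, fun w v _ => rfl⟩
end

section
/- Let C = ℤ and consider the arena with V₂ = {a}, V₁ = {b, c}, Γ(a) = 1, Γ(b) = −1, Γ(c) = 0, and edges a→a, a→b, b→b, b→c, c→c. Let W = {ρ ∈ ℤ^ω : (for all n, Σ_{i<n} ρ(i) ≥ 0) and limsup_{n→∞} (1/n)·Σ_{k=1}^{n} (Σ_{i<k} ρ(i)) ≤ 0} (the energy level stays nonnegative and the average-energy is at most 0). Then: (i) for every w ∈ C^* and every vertex v, one of the two players has a finite-memory winning strategy from (w, v); in particular, for every n ≥ 1, Player 1 has a finite-memory winning strategy from (1ⁿ, b), where 1ⁿ is the word consisting of n letters equal to 1; but (ii) there is no finite-memory strategy of Player 1 that is winning from (1ⁿ, b) for all n ≥ 1 simultaneously. Consequently this game is finite-memory determined from every history, yet has no finite-memory SPE (and hence no finite-memory hSPE). -/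
/-- The three vertices of the arena of Fig. 4. -/
inductive V10 : Type | a | b | c
  deriving DecidableEq

/-- The arena of Fig. 4: Player 2 owns `a`, Player 1 owns `b` and `c`. -/
def O10 : Arena V10 ℤ :=
  ⟨{V10.b, V10.c}, {V10.a},
    {(V10.a, V10.a), (V10.a, V10.b), (V10.b, V10.b), (V10.b, V10.c), (V10.c, V10.c)},
    fun v => match v with
      | V10.a => 1
      | V10.b => -1
      | V10.c => 0⟩

/-- The energy level after `k` steps. -/
def el (ρ : ℕ → ℤ) (k : ℕ) : ℤ := ∑ i ∈ Finset.range k, ρ i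

/-- The winning condition: the energy level stays nonnegative and the average-energy
(the limsup of the averages of the energy levels) is at most 0. -/
def W10 : Set (ℕ → ℤ) :=
  {ρ | (∀ n : ℕ, 0 ≤ el ρ n) ∧
    ∀ ε : ℝ, 0 < ε → ∃ N : ℕ, ∀ n ≥ N, 1 ≤ n →
      (∑ k ∈ Finset.Icc 1 n, ((el ρ k : ℝ))) / (n : ℝ) ≤ ε}

namespace S10
open V10

/-! ### basic arena facts -/

lemma E_b {u : V10} (h : (V10.b, u) ∈ O10.E) : u = V10.b ∨ u = V10.c := by
  simp [O10, Prod.ext_iff] at h; exact h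

lemma E_c {u : V10} (h : (V10.c, u) ∈ O10.E) : u = V10.c := by
  simp [O10, Prod.ext_iff] at h; exact h

lemma mem_V1_b : V10.b ∈ O10.V1 := by simp [O10]
lemma mem_V1_c : V10.c ∈ O10.V1 := by simp [O10]
lemma not_mem_V1_a : V10.a ∉ O10.V1 := by simp [O10]
lemma mem_V2_a : V10.a ∈ O10.V2 := by simp [O10]

lemma edge_aa : (V10.a, V10.a) ∈ O10.E := by simp [O10]
lemma edge_bb : (V10.b, V10.b) ∈ O10.E := by simp [O10]
lemma edge_bc : (V10.b, V10.c) ∈ O10.E := by simp [O10]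
lemma edge_cc : (V10.c, V10.c) ∈ O10.E := by simp [O10]

lemma combine_b (σ1 σ2 : List ℤ → V10 → V10) (w : List ℤ) :
    O10.combine σ1 σ2 w V10.b = σ1 w V10.b := by
  simp only [Arena.combine]; rw [if_pos mem_V1_b]

lemma combine_c (σ1 σ2 : List ℤ → V10 → V10) (w : List ℤ) :
    O10.combine σ1 σ2 w V10.c = σ1 w V10.c := by
  simp only [Arena.combine]; rw [if_pos mem_V1_c]

lemma combine_a (σ1 σ2 : List ℤ → V10 → V10) (w : List ℤ) :
    O10.combine σ1 σ2 w V10.a = σ2 w V10.a := by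
  simp only [Arena.combine]; rw [if_neg not_mem_V1_a]

/-- the identity-like strategy, valid for both players -/
def σid : List ℤ → V10 → V10 := fun _ v => v

lemma σid_valid1 : O10.Valid1 σid := by
  intro w v hv
  simp only [O10, Set.mem_insert_iff, Set.mem_singleton_iff] at hv
  rcases hv with rfl | rfl
  · exact edge_bb
  · exact edge_cc

lemma σid_valid2 : O10.Valid2 σid := by
  intro w v hv
  simp only [O10, Set.mem_singleton_iff] at hv
  subst hv; exact edge_aa

lemma σid_FM {Vi : Set V10} : Arena.IsFM Vi σid :=
  ⟨PUnit, inferInstance, PUnit.unit, fun _ _ => PUnit.unit, fun _ v => v,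
    fun _ _ _ => rfl⟩

/-! ### play and stepSeq facts -/

lemma stepSeq_succ {V : Type} (O : Arena V ℤ) (τ : List ℤ → V → V) (w : List ℤ) (v : V) (k : ℕ) :
    O.stepSeq τ w v (k+1) =
      ((O.stepSeq τ w v k).1 ++ [O.Γ (O.stepSeq τ w v k).2],
        τ (O.stepSeq τ w v k).1 (O.stepSeq τ w v k).2) := rfl

lemma stepSeq_len {V : Type} (O : Arena V ℤ) (τ : List ℤ → V → V) (w : List ℤ) (v : V) :
    ∀ k, (O.stepSeq τ w v k).1.length = w.length + k := by
  intro k; induction k with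
  | zero => rfl
  | succ k ih => rw [stepSeq_succ]; simp [ih]; omega

lemma play_lt {V : Type} (O : Arena V ℤ) (τ : List ℤ → V → V) (w : List ℤ) (v : V)
    {i : ℕ} (h : i < w.length) : O.play τ w v i = w.getD i 0 := by
  simp only [Arena.play]
  rw [dif_pos h]
  simp [List.getD_eq_getElem?_getD, List.getElem?_eq_getElem h]

lemma play_ge {V : Type} (O : Arena V ℤ) (τ : List ℤ → V → V) (w : List ℤ) (v : V)
    (j : ℕ) : O.play τ w v (w.length + j) = O.Γ (O.stepSeq τ w v j).2 := by
  simp only [Arena.play]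
  rw [dif_neg (by omega)]
  have h2 : w.length + j - w.length = j := by omega
  rw [h2]

/-! ### prefix sums -/

def pre (w : List ℤ) (k : ℕ) : ℤ := ∑ i ∈ Finset.range k, w.getD i 0

def Bw (w : List ℤ) : ℤ := ∑ i ∈ Finset.range w.length, |w.getD i 0|

lemma Bw_nonneg (w : List ℤ) : 0 ≤ Bw w :=
  Finset.sum_nonneg fun _ _ => abs_nonneg _

lemma pre_succ (w : List ℤ) (k : ℕ) : pre w (k+1) = pre w k + w.getD k 0 :=
  Finset.sum_range_succ _ _

lemma pre_ge_len (w : List ℤ) {k : ℕ} (h : w.length ≤ k) : pre w k = pre w w.length := by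
  unfold pre
  symm
  apply Finset.sum_subset (Finset.range_subset_range.2 h)
  intro i _ hi
  rw [Finset.mem_range, Nat.not_lt] at hi
  exact List.getD_eq_default _ _ hi

lemma pre_lower (w : List ℤ) (k : ℕ) : -(Bw w) ≤ pre w k := by
  rcases le_total k w.length with h | h
  · have h1 : |pre w k| ≤ Bw w := by
      refine (Finset.abs_sum_le_sum_abs _ _).trans ?_
      exact Finset.sum_le_sum_of_subset_of_nonneg (Finset.range_subset_range.2 h)
        (fun i _ _ => abs_nonneg _)
    have := abs_le.1 h1
    linarith [this.1]
  · rw [pre_ge_len w h]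
    have h1 : |pre w w.length| ≤ Bw w := by
      refine (Finset.abs_sum_le_sum_abs _ _).trans ?_
      exact le_of_eq rfl
    have := abs_le.1 h1
    linarith [this.1]

lemma el_succ (ρ : ℕ → ℤ) (k : ℕ) : el ρ (k+1) = el ρ k + ρ k :=
  Finset.sum_range_succ _ _

lemma el_play_le {V : Type} (O : Arena V ℤ) (τ : List ℤ → V → V) (w : List ℤ) (v : V)
    {k : ℕ} (h : k ≤ w.length) : el (O.play τ w v) k = pre w k := by
  unfold el pre
  refine Finset.sum_congr rfl fun i hi => ?_
  rw [Finset.mem_range] at hi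
  exact play_lt O τ w v (lt_of_lt_of_le hi h)


/-! ### average-energy lemmas -/

lemma avg_of_ev_zero (ρ : ℕ → ℤ) (K : ℕ) (h : ∀ k, K ≤ k → el ρ k = 0) :
    ∀ ε : ℝ, 0 < ε → ∃ N : ℕ, ∀ n ≥ N, 1 ≤ n →
      (∑ k ∈ Finset.Icc 1 n, ((el ρ k : ℝ))) / (n : ℝ) ≤ ε := by
  intro ε hε
  set C : ℝ := ∑ k ∈ Finset.Icc 1 K, ((el ρ k : ℝ)) with hC
  obtain ⟨N0, hN0⟩ := exists_nat_gt (C / ε)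
  refine ⟨max K N0, fun n hn h1 => ?_⟩
  have hKn : K ≤ n := le_trans (le_max_left _ _) hn
  have hN0n : N0 ≤ n := le_trans (le_max_right _ _) hn
  have hsum : ∑ k ∈ Finset.Icc 1 n, ((el ρ k : ℝ)) = C := by
    rw [hC]
    symm
    apply Finset.sum_subset (Finset.Icc_subset_Icc_right hKn)
    intro x hx hx2
    rw [Finset.mem_Icc] at hx hx2
    rw [h x (by omega)]
    simp
  rw [hsum]
  have hn0 : (0:ℝ) < (n:ℝ) := by exact_mod_cast Nat.lt_of_lt_of_le Nat.zero_lt_one h1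
  rw [div_le_iff₀ hn0]
  have h2 : C < N0 * ε := (div_lt_iff₀ hε).1 hN0
  have h3 : (N0:ℝ) ≤ (n:ℝ) := by exact_mod_cast hN0n
  nlinarith

lemma not_avg (ρ : ℕ → ℤ) (K : ℕ) (B : ℤ) (hB : 0 ≤ B)
    (hlow : ∀ k, -B ≤ el ρ k) (hge : ∀ k, K ≤ k → 1 ≤ el ρ k) :
    ¬ (∀ ε : ℝ, 0 < ε → ∃ N : ℕ, ∀ n ≥ N, 1 ≤ n →
      (∑ k ∈ Finset.Icc 1 n, ((el ρ k : ℝ))) / (n : ℝ) ≤ ε) := by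
  intro h
  obtain ⟨N, hN⟩ := h (1/2) one_half_pos
  set K' : ℕ := max K 1 with hK'
  set P : ℕ := K' * (B.toNat + 1) with hP
  set n : ℕ := max N (2 * P + 1) with hn
  have hK1 : 1 ≤ K' := le_max_right _ _
  have hKP : K' ≤ P := by
    rw [hP]; nlinarith [Nat.le_mul_of_pos_right K' (Nat.succ_pos B.toNat)]
  have hK'n : K' ≤ n := by omega
  have h1n : 1 ≤ n := by omega
  have key := hN n (le_max_left _ _) h1n
  -- integer lower bound on the sum
  have hs1 : (K' : ℤ) * (-B) ≤ ∑ k ∈ Finset.Icc 1 K', el ρ k := by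
    have := Finset.sum_le_sum (f := fun _ : ℕ => -B) (g := fun k => el ρ k)
      (s := Finset.Icc 1 K') (fun k _ => hlow k)
    simpa [Finset.sum_const, Nat.card_Icc, mul_comm] using this
  have hs2 : ((n - K' : ℕ) : ℤ) ≤ ∑ k ∈ Finset.Ioc K' n, el ρ k := by
    have := Finset.sum_le_sum (f := fun _ : ℕ => (1:ℤ)) (g := fun k => el ρ k)
      (s := Finset.Ioc K' n) (fun k hk => hge k (by
        rw [Finset.mem_Ioc] at hk; omega))
    simpa [Finset.sum_const, Nat.card_Ioc] using this
  have hIcc : Finset.Icc 1 n = Finset.Ioc 0 n := by rw [← Finset.Icc_add_one_left_eq_Ioc]; rfl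
  have hIcc2 : Finset.Icc 1 K' = Finset.Ioc 0 K' := by rw [← Finset.Icc_add_one_left_eq_Ioc]; rfl
  have hsplit := Finset.sum_Ioc_consecutive (fun k => el ρ k) (Nat.zero_le K') hK'n
  have hZ : (K' : ℤ) * (-B) + ((n - K' : ℕ) : ℤ) ≤ ∑ k ∈ Finset.Icc 1 n, el ρ k := by
    rw [hIcc, ← hsplit, ← hIcc2]
    exact add_le_add hs1 hs2
  -- the real inequality from key
  have hn0 : (0:ℝ) < (n:ℝ) := by exact_mod_cast Nat.lt_of_lt_of_le Nat.zero_lt_one h1n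
  rw [div_le_iff₀ hn0] at key
  have hcastsum : (∑ k ∈ Finset.Icc 1 n, ((el ρ k : ℝ))) = ((∑ k ∈ Finset.Icc 1 n, el ρ k : ℤ) : ℝ) := by
    push_cast; rfl
  rw [hcastsum] at key
  have key2 : 2 * (∑ k ∈ Finset.Icc 1 n, el ρ k) ≤ (n : ℤ) := by
    have : ((2 * (∑ k ∈ Finset.Icc 1 n, el ρ k) : ℤ) : ℝ) ≤ ((n:ℤ):ℝ) := by
      push_cast
      push_cast at key
      linarith
    exact_mod_cast this
  -- now derive contradiction in ℤ
  have hPcast : ((P : ℕ) : ℤ) = (K' : ℤ) * (B + 1) := by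
    rw [hP]; push_cast [Int.toNat_of_nonneg hB]; ring
  have hnP : (2 * P + 1 : ℕ) ≤ n := le_max_right _ _
  have hnPZ : (2 * (P:ℤ) + 1) ≤ (n:ℤ) := by exact_mod_cast hnP
  have hsub : ((n - K' : ℕ) : ℤ) = (n:ℤ) - (K':ℤ) := by
    push_cast [Nat.cast_sub hK'n]; ring
  rw [hsub] at hZ
  have hKB : (K':ℤ) * (-B) = -((K':ℤ) * B) := by ring
  nlinarith [hZ, key2, hnPZ, hPcast]


/-! ### vertex-sequence lemmas -/

lemma stepSeq_c (σ1 σ2 : List ℤ → V10 → V10) (h1 : O10.Valid1 σ1) (w : List ℤ) :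
    ∀ j, (O10.stepSeq (O10.combine σ1 σ2) w V10.c j).2 = V10.c := by
  intro j; induction j with
  | zero => rfl
  | succ j ih =>
    rw [stepSeq_succ, ih]
    exact E_c (by rw [combine_c]; exact h1 _ _ mem_V1_c)

lemma stepSeq_a (σ1 : List ℤ → V10 → V10) (w : List ℤ) :
    ∀ j, (O10.stepSeq (O10.combine σ1 σid) w V10.a j).2 = V10.a := by
  intro j; induction j with
  | zero => rfl
  | succ j ih =>
    rw [stepSeq_succ, ih]
    rw [combine_a]
    rfl

/-! ### Player 2 wins -/

lemma wins2_of_neg {w : List ℤ} {k : ℕ} (hk : pre w k < 0) (v : V10) :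
    O10.Winning2 W10 σid w v := by
  intro σ1 _ hW
  obtain ⟨hA, _⟩ := hW
  set k' := min k w.length with hk'
  have hpre : pre w k' = pre w k := by
    rcases le_total k w.length with h | h
    · rw [hk', min_eq_left h]
    · rw [hk', min_eq_right h, pre_ge_len w h]
  have := hA k'
  rw [el_play_le O10 _ w v (min_le_right _ _), hpre] at this
  omega

lemma wins2_b {w : List ℤ} (hs : pre w w.length ≤ 0) :
    O10.Winning2 W10 σid w V10.b := by
  intro σ1 _ hW
  obtain ⟨hA, _⟩ := hW
  set ρ := O10.play (O10.combine σ1 σid) w V10.b with hρ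
  have h1 := hA (w.length + 1)
  have e1 : el ρ (w.length + 1) = el ρ w.length + ρ w.length := el_succ ρ w.length
  have e2 : el ρ w.length = pre w w.length := el_play_le O10 _ w V10.b le_rfl
  have e3 : ρ w.length = -1 := by
    have h5 := play_ge O10 (O10.combine σ1 σid) w V10.b 0
    rw [Nat.add_zero] at h5
    rw [hρ, h5]
    rfl
  rw [e1, e2, e3] at h1
  omega

lemma wins2_c {w : List ℤ} (hs : 1 ≤ pre w w.length) :
    O10.Winning2 W10 σid w V10.c := by
  intro σ1 hσ1 hW
  obtain ⟨hA, hB⟩ := hW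
  set ρ := O10.play (O10.combine σ1 σid) w V10.c with hρ
  have hel : ∀ j, el ρ (w.length + j) = pre w w.length := by
    intro j; induction j with
    | zero => rw [Nat.add_zero]; exact el_play_le O10 _ w V10.c le_rfl
    | succ j ih =>
      rw [show w.length + (j+1) = (w.length + j) + 1 by ring, el_succ, ih, hρ,
        play_ge O10 _ w V10.c j, stepSeq_c σ1 σid hσ1 w j]
      show pre w w.length + 0 = pre w w.length
      ring
  refine not_avg ρ w.length (Bw w) (Bw_nonneg w) ?_ ?_ hB
  · intro k
    rcases le_or_gt k w.length with h | h
    · rw [el_play_le O10 _ w V10.c h]; exact pre_lower w k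
    · have : k = w.length + (k - w.length) := by omega
      rw [this, hel]
      have := pre_lower w w.length
      omega
  · intro k hk
    have : k = w.length + (k - w.length) := by omega
    rw [this, hel]
    exact hs

lemma wins2_a (w : List ℤ) : O10.Winning2 W10 σid w V10.a := by
  intro σ1 hσ1 hW
  obtain ⟨hA, hB⟩ := hW
  set ρ := O10.play (O10.combine σ1 σid) w V10.a with hρ
  have hel : ∀ j, el ρ (w.length + j) = pre w w.length + j := by
    intro j; induction j with
    | zero => rw [Nat.add_zero]; simpa using el_play_le O10 _ w V10.a le_rfl
    | succ j ih =>
      rw [show w.length + (j+1) = (w.length + j) + 1 by ring, el_succ, ih, hρ,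
        play_ge O10 _ w V10.a j, stepSeq_a σ1 w j]
      show pre w w.length + j + 1 = pre w w.length + (j + 1 : ℕ)
      push_cast; ring
  have hlow := pre_lower w w.length
  refine not_avg ρ (w.length + ((Bw w).toNat + 1)) (Bw w) (Bw_nonneg w) ?_ ?_ hB
  · intro k
    rcases le_or_gt k w.length with h | h
    · rw [el_play_le O10 _ w V10.a h]; exact pre_lower w k
    · have hk : k = w.length + (k - w.length) := by omega
      rw [hk, hel]
      have : (0:ℤ) ≤ (k - w.length : ℕ) := by positivity
      omega
  · intro k hk
    have hk2 : k = w.length + (k - w.length) := by omega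
    rw [hk2, hel]
    have h3 : ((Bw w).toNat + 1 : ℤ) ≤ ((k - w.length : ℕ) : ℤ) := by
      have : (Bw w).toNat + 1 ≤ k - w.length := by omega
      exact_mod_cast this
    have h4 : ((Bw w).toNat : ℤ) = Bw w := Int.toNat_of_nonneg (Bw_nonneg w)
    omega


/-! ### Player 1's counting strategy -/

def cstrat (T : ℕ) : List ℤ → V10 → V10 := fun w' v =>
  match v with
  | V10.a => V10.a
  | V10.b => if w'.length = T then V10.c else V10.b
  | V10.c => V10.c

lemma cstrat_valid (T : ℕ) : O10.Valid1 (cstrat T) := by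
  intro w v hv
  simp only [O10, Set.mem_insert_iff, Set.mem_singleton_iff] at hv
  rcases hv with rfl | rfl
  · show (V10.b, if w.length = T then V10.c else V10.b) ∈ O10.E
    split
    · exact edge_bc
    · exact edge_bb
  · exact edge_cc

lemma cstrat_FM (T : ℕ) : Arena.IsFM O10.V1 (cstrat T) := by
  refine ⟨Fin (T+2), inferInstance, ⟨0, by omega⟩,
    fun m _ => ⟨min (m.val+1) (T+1), by omega⟩,
    fun m v => match v with
      | V10.a => V10.a
      | V10.b => if m.val = T then V10.c else V10.b
      | V10.c => V10.c, ?_⟩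
  have key : ∀ (w : List ℤ) (m : Fin (T+2)),
      (w.foldl (fun (m : Fin (T+2)) (_ : ℤ) => ⟨min (m.val+1) (T+1), by omega⟩) m).val
        = min (m.val + w.length) (T+1) := by
    intro w
    induction w with
    | nil => intro m; have := m.isLt; simp; omega
    | cons c w ih =>
      intro m
      rw [List.foldl_cons, ih]
      simp only [List.length_cons]
      omega
  intro w v hv
  simp only [O10, Set.mem_insert_iff, Set.mem_singleton_iff] at hv
  rcases hv with rfl | rfl
  · show (if w.length = T then V10.c else V10.b) = _
    have hv : (w.foldl (fun (m : Fin (T+2)) (_ : ℤ) => ⟨min (m.val+1) (T+1), by omega⟩)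
        (⟨0, by omega⟩ : Fin (T+2))).val = min w.length (T+1) := by
      rw [key]
      norm_num
    by_cases hT : w.length = T
    · rw [if_pos hT]
      exact (if_pos (by rw [hv]; omega)).symm
    · rw [if_neg hT]
      exact (if_neg (by rw [hv]; omega)).symm
  · rfl

lemma wins1_b {w : List ℤ} (h0 : ∀ k, 0 ≤ pre w k) (h1 : 1 ≤ pre w w.length) :
    ∃ σ1, O10.Valid1 σ1 ∧ Arena.IsFM O10.V1 σ1 ∧ O10.Winning1 W10 σ1 w V10.b := by
  set L := w.length with hL
  set s : ℤ := pre w w.length with hs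
  set s' : ℕ := s.toNat with hs'
  have hs'1 : 1 ≤ s' := by omega
  set T : ℕ := L + s' - 1 with hT
  refine ⟨cstrat T, cstrat_valid T, cstrat_FM T, ?_⟩
  intro σ2 hσ2
  set τ := O10.combine (cstrat T) σ2 with hτ
  set ρ := O10.play τ w V10.b with hρ
  have hvert : ∀ j, (O10.stepSeq τ w V10.b j).2 = (if j < s' then V10.b else V10.c) := by
    intro j; induction j with
    | zero => rw [if_pos (by omega)]; rfl
    | succ j ih =>
      rw [stepSeq_succ, ih]
      by_cases hj : j < s'
      · rw [if_pos hj, hτ, combine_b]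
        show (if (O10.stepSeq τ w V10.b j).1.length = T then V10.c else V10.b) = _
        rw [stepSeq_len]
        by_cases hj2 : j = s' - 1
        · rw [if_pos (by omega), if_neg (by omega)]
        · rw [if_neg (by omega), if_pos (by omega)]
      · rw [if_neg hj, hτ, combine_c]
        rw [if_neg (by omega)]
        rfl
  have hel : ∀ j, el ρ (L + j) = s - min j s' := by
    intro j; induction j with
    | zero =>
      rw [Nat.add_zero]
      rw [el_play_le O10 τ w V10.b le_rfl]
      simp
      exact hs.symm
    | succ j ih =>
      rw [show L + (j+1) = (L + j) + 1 from rfl, el_succ, ih, hρ, play_ge O10 τ w V10.b j,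
        hvert j]
      by_cases hj : j < s'
      · rw [if_pos hj]
        show s - min (j:ℕ) s' + (-1) = s - min (j+1:ℕ) s'
        omega
      · rw [if_neg hj]
        show s - min (j:ℕ) s' + 0 = s - min (j+1:ℕ) s'
        omega
  constructor
  · intro n
    rcases le_or_gt n L with h | h
    · rw [el_play_le O10 τ w V10.b h]
      exact h0 n
    · have hn : n = L + (n - L) := by omega
      rw [hn, hel]
      omega
  · apply avg_of_ev_zero ρ (L + s')
    intro k hk
    have hk2 : k = L + (k - L) := by omega
    rw [hk2, hel]
    have : s' ≤ k - L := by omega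
    omega


/-! ### replicate prefix -/

lemma getD_rep (n i : ℕ) : (List.replicate n (1:ℤ)).getD i 0 = if i < n then 1 else 0 := by
  by_cases h : i < n
  · rw [if_pos h]
    simp [List.getD_eq_getElem?_getD, List.getElem?_replicate, h]
  · rw [if_neg h]
    exact List.getD_eq_default _ _ (by simpa using Nat.not_lt.1 h)

lemma pre_rep (n k : ℕ) : pre (List.replicate n (1:ℤ)) k = min k n := by
  induction k with
  | zero => simp [pre]
  | succ k ih =>
    rw [pre_succ, ih, getD_rep]
    by_cases h : k < n
    · rw [if_pos h]; omega
    · rw [if_neg h]; omega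

/-! ### no uniform finite-memory winning strategy -/

lemma no_uniform :
    ¬ ∃ σ1, O10.Valid1 σ1 ∧ Arena.IsFM O10.V1 σ1 ∧
      ∀ n : ℕ, 1 ≤ n → O10.Winning1 W10 σ1 (List.replicate n (1 : ℤ)) V10.b := by
  rintro ⟨σ1, hval, ⟨M, instM, m0, αu, αn, hFM⟩, hwin⟩
  haveI := instM
  set f : ℕ → M := fun n => (List.replicate n (1:ℤ)).foldl αu m0 with hf
  have key : ∀ n1 n2 : ℕ, 1 ≤ n1 → n1 < n2 → f n1 = f n2 → False := by
    intro n1 n2 h1 h12 hfe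
    set τ := O10.combine σ1 σid with hτ
    set ρ1 := O10.play τ (List.replicate n1 (1:ℤ)) V10.b with hρ1
    set ρ2 := O10.play τ (List.replicate n2 (1:ℤ)) V10.b with hρ2
    have hW1 : ρ1 ∈ W10 := hwin n1 h1 σid σid_valid2
    have hW2 : ρ2 ∈ W10 := hwin n2 (by omega) σid σid_valid2
    -- the two runs stay in lock-step
    have hstep : ∀ j, ∃ (u : List ℤ) (x : V10), (x = V10.b ∨ x = V10.c) ∧
        O10.stepSeq τ (List.replicate n1 (1:ℤ)) V10.b j = (List.replicate n1 (1:ℤ) ++ u, x) ∧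
        O10.stepSeq τ (List.replicate n2 (1:ℤ)) V10.b j = (List.replicate n2 (1:ℤ) ++ u, x) := by
      intro j; induction j with
      | zero => exact ⟨[], V10.b, Or.inl rfl, by simp [Arena.stepSeq], by simp [Arena.stepSeq]⟩
      | succ j ih =>
        obtain ⟨u, x, hx, ha1, ha2⟩ := ih
        have hmem : x ∈ O10.V1 := by rcases hx with rfl | rfl; exacts [mem_V1_b, mem_V1_c]
        have hσeq : ∀ n, f n = f n1 →
            σ1 (List.replicate n (1:ℤ) ++ u) x = αn (u.foldl αu (f n1)) x := by
          intro n hn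
          rw [hFM _ x hmem, List.foldl_append]
          exact congrArg (fun m => αn (List.foldl αu m u) x) hn
        have hcomb : ∀ w', τ w' x = σ1 w' x := by
          intro w'
          rcases hx with rfl | rfl
          · exact combine_b σ1 σid w'
          · exact combine_c σ1 σid w'
        set x' := αn (u.foldl αu (f n1)) x with hx'
        have hedge : (x, x') ∈ O10.E := by
          rw [← hσeq n1 rfl]
          exact hval _ x hmem
        have hx'mem : x' = V10.b ∨ x' = V10.c := by
          rcases hx with rfl | rfl
          · exact E_b hedge
          · exact Or.inr (E_c hedge)
        refine ⟨u ++ [O10.Γ x], x', hx'mem, ?_, ?_⟩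
        · rw [stepSeq_succ, ha1]
          simp only [List.append_assoc]
          exact Prod.ext rfl (by rw [hcomb, hσeq n1 rfl])
        · rw [stepSeq_succ, ha2]
          simp only [List.append_assoc]
          exact Prod.ext rfl (by rw [hcomb, hσeq n2 hfe.symm])
    have hlen1 : (List.replicate n1 (1:ℤ)).length = n1 := by simp
    have hlen2 : (List.replicate n2 (1:ℤ)).length = n2 := by simp
    -- identical tails
    have htail : ∀ j, ρ1 (n1 + j) = ρ2 (n2 + j) := by
      intro j
      obtain ⟨u, x, _, ha1, ha2⟩ := hstep j
      have e1 : ρ1 (n1 + j) = O10.Γ x := by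
        have h5 := play_ge O10 τ (List.replicate n1 (1:ℤ)) V10.b j
        rw [ha1, hlen1] at h5
        exact h5
      have e2 : ρ2 (n2 + j) = O10.Γ x := by
        have h5 := play_ge O10 τ (List.replicate n2 (1:ℤ)) V10.b j
        rw [ha2, hlen2] at h5
        exact h5
      rw [e1, e2]
    have hel1 : ∀ k ≤ n1, el ρ1 k = min k n1 := by
      intro k hk
      rw [hρ1, el_play_le O10 τ _ V10.b (by omega), pre_rep]
    have hel2 : ∀ k ≤ n2, el ρ2 k = min k n2 := by
      intro k hk
      rw [hρ2, el_play_le O10 τ _ V10.b (by omega), pre_rep]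
    have hdiff : ∀ j, el ρ2 (n2 + j) = el ρ1 (n1 + j) + (n2 - n1 : ℤ) := by
      intro j; induction j with
      | zero =>
        rw [Nat.add_zero, Nat.add_zero, hel1 n1 le_rfl, hel2 n2 le_rfl]
        omega
      | succ j ih =>
        rw [show n2 + (j+1) = (n2 + j) + 1 from rfl, show n1 + (j+1) = (n1 + j) + 1 from rfl,
          el_succ, el_succ, ih, htail j]
        ring
    -- ρ2's energy is everywhere ≥ 1 (for k ≥ 1), contradicting its average condition
    obtain ⟨hA1, _⟩ := hW1
    obtain ⟨hA2, hB2⟩ := hW2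
    refine not_avg ρ2 1 0 le_rfl (fun k => by simpa using hA2 k) ?_ hB2
    intro k hk
    rcases le_or_gt k n2 with h | h
    · rw [hel2 k h]; omega
    · have hk2 : k = n2 + (k - n2) := by omega
      rw [hk2, hdiff]
      have := hA1 (n1 + (k - n2))
      have hn12 : (1:ℤ) ≤ (n2 - n1 : ℤ) := by
        have : (n1:ℤ) < n2 := by exact_mod_cast h12
        omega
      omega
  obtain ⟨i, j, hij, hfeq⟩ := Finite.exists_ne_map_eq_of_infinite (fun k : ℕ => f (k + 1))
  rcases Nat.lt_trichotomy i j with h | h | h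
  · exact key (i+1) (j+1) (by omega) (by omega) hfeq
  · exact absurd h hij
  · exact key (j+1) (i+1) (by omega) (by omega) hfeq.symm


/-! ### Player 1 wins at c with a good history -/

lemma wins1_c {w : List ℤ} (h0 : ∀ k, 0 ≤ pre w k) (hs : pre w w.length = 0) :
    ∃ σ1, O10.Valid1 σ1 ∧ Arena.IsFM O10.V1 σ1 ∧ O10.Winning1 W10 σ1 w V10.c := by
  refine ⟨σid, σid_valid1, σid_FM, ?_⟩
  intro σ2 hσ2
  set ρ := O10.play (O10.combine σid σ2) w V10.c with hρ
  have hel : ∀ j, el ρ (w.length + j) = pre w w.length := by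
    intro j; induction j with
    | zero => rw [Nat.add_zero]; exact el_play_le O10 _ w V10.c le_rfl
    | succ j ih =>
      rw [show w.length + (j+1) = (w.length + j) + 1 from rfl, el_succ, ih, hρ,
        play_ge O10 _ w V10.c j, stepSeq_c σid σ2 σid_valid1 w j]
      show pre w w.length + 0 = pre w w.length
      ring
  constructor
  · intro n
    rcases le_or_gt n w.length with h | h
    · rw [el_play_le O10 _ w V10.c h]; exact h0 n
    · have hn : n = w.length + (n - w.length) := by omega
      rw [hn, hel]; omega
  · apply avg_of_ev_zero ρ w.length
    intro k hk
    have hk2 : k = w.length + (k - w.length) := by omega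
    rw [hk2, hel, hs]

/-! ### histories -/

lemma edge_ab : (V10.a, V10.b) ∈ O10.E := by simp [O10]

lemma hist_rep_a : ∀ k, O10.Hist (List.replicate k (1:ℤ)) V10.a := by
  intro k; induction k with
  | zero => exact Arena.Hist.base V10.a (Set.mem_union_right _ mem_V2_a)
  | succ k ih =>
    have h := Arena.Hist.step ih edge_aa
    rw [show O10.Γ V10.a = 1 from rfl] at h
    rwa [← List.replicate_succ'] at h

lemma hist_rep_b {n : ℕ} (hn : 1 ≤ n) : O10.Hist (List.replicate n (1:ℤ)) V10.b := by
  obtain ⟨m, rfl⟩ : ∃ m, n = m + 1 := ⟨n - 1, by omega⟩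
  have h := Arena.Hist.step (hist_rep_a m) edge_ab
  rw [show O10.Γ V10.a = 1 from rfl] at h
  rwa [← List.replicate_succ'] at h

/-! ### the main pieces -/

lemma determined : ∀ (w : List ℤ), ∀ v ∈ O10.vertices,
    (∃ σ1, O10.Valid1 σ1 ∧ Arena.IsFM O10.V1 σ1 ∧ O10.Winning1 W10 σ1 w v) ∨
    (∃ σ2, O10.Valid2 σ2 ∧ Arena.IsFM O10.V2 σ2 ∧ O10.Winning2 W10 σ2 w v) := by
  intro w v _
  cases v with
  | a => exact Or.inr ⟨σid, σid_valid2, σid_FM, wins2_a w⟩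
  | b =>
    by_cases hg : ∀ k, 0 ≤ pre w k
    · by_cases hs : 1 ≤ pre w w.length
      · exact Or.inl (wins1_b hg hs)
      · exact Or.inr ⟨σid, σid_valid2, σid_FM, wins2_b (by omega)⟩
    · push_neg at hg
      obtain ⟨k, hk⟩ := hg
      exact Or.inr ⟨σid, σid_valid2, σid_FM, wins2_of_neg hk V10.b⟩
  | c =>
    by_cases hg : ∀ k, 0 ≤ pre w k
    · by_cases hs : pre w w.length = 0
      · exact Or.inl (wins1_c hg hs)
      · refine Or.inr ⟨σid, σid_valid2, σid_FM, wins2_c ?_⟩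
        have := hg w.length
        omega
    · push_neg at hg
      obtain ⟨k, hk⟩ := hg
      exact Or.inr ⟨σid, σid_valid2, σid_FM, wins2_of_neg hk V10.c⟩

lemma wins1_rep (n : ℕ) (hn : 1 ≤ n) :
    ∃ σ1, O10.Valid1 σ1 ∧ Arena.IsFM O10.V1 σ1 ∧
      O10.Winning1 W10 σ1 (List.replicate n (1 : ℤ)) V10.b := by
  apply wins1_b
  · intro k; rw [pre_rep]; omega
  · rw [List.length_replicate, pre_rep]; omega

lemma noFMSPE : ¬ O10.HasFMSPE W10 := by
  rintro ⟨σ1, σ2, ⟨hv1, hv2, hspe⟩, hfm1, hfm2⟩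
  apply no_uniform
  refine ⟨σ1, hv1, hfm1, ?_⟩
  intro n hn
  obtain ⟨h1c, h2c⟩ := hspe _ _ (hist_rep_b hn)
  obtain ⟨σ1s, hvs, _, hwins⟩ := wins1_rep n hn
  have hmem : O10.play (O10.combine σ1 σ2) (List.replicate n (1:ℤ)) V10.b ∈ W10 := by
    by_contra hno
    exact (h2c hno σ1s hvs) (hwins σ2 hv2)
  exact h1c hmem

lemma noFMhSPE : ¬ O10.HasFMhSPE W10 := by
  rintro ⟨σ1, σ2, ⟨hv1, hv2, h⟩, hfm1, hfm2⟩
  apply noFMSPE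
  refine ⟨σ1, σ2, ⟨hv1, hv2, fun w v _ => h w v ?_⟩, hfm1, hfm2⟩
  cases v with
  | a => exact Set.mem_union_right _ mem_V2_a
  | b => exact Set.mem_union_left _ mem_V1_b
  | c => exact Set.mem_union_left _ mem_V1_c

end S10

/-- this average-energy game with lower-bounded energy is finite-memory
determined from every history, yet admits no finite-memory SPE, hence no finite-memory
hSPE. -/
theorem stmt10 :
    (∀ (w : List ℤ), ∀ v ∈ O10.vertices,
      (∃ σ1, O10.Valid1 σ1 ∧ Arena.IsFM O10.V1 σ1 ∧ O10.Winning1 W10 σ1 w v) ∨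
      (∃ σ2, O10.Valid2 σ2 ∧ Arena.IsFM O10.V2 σ2 ∧ O10.Winning2 W10 σ2 w v)) ∧
    (∀ n : ℕ, 1 ≤ n →
      ∃ σ1, O10.Valid1 σ1 ∧ Arena.IsFM O10.V1 σ1 ∧
        O10.Winning1 W10 σ1 (List.replicate n (1 : ℤ)) V10.b) ∧
    (¬ ∃ σ1, O10.Valid1 σ1 ∧ Arena.IsFM O10.V1 σ1 ∧
      ∀ n : ℕ, 1 ≤ n → O10.Winning1 W10 σ1 (List.replicate n (1 : ℤ)) V10.b) ∧
    (¬ O10.HasFMSPE W10) ∧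
    (¬ O10.HasFMhSPE W10) :=
  ⟨S10.determined, fun n hn => S10.wins1_rep n hn, S10.no_uniform, S10.noFMSPE, S10.noFMhSPE⟩
end

section
/- Let C = {0, 1} and consider the one-player arena with V₁ = {u₀, u₁}, V₂ = ∅, Γ(u₀) = 0, Γ(u₁) = 1, and all four edges present. Let W ⊆ C^ω be the set of sequences that are not ultimately periodic, where ρ is ultimately periodic if there are N ∈ ℕ and p ≥ 1 with ρ(n+p) = ρ(n) for all n ≥ N. Then W is prefix-independent, Player 1 has a winning strategy from every (w, v) ∈ C^* × V, but Player 1 has no finite-memory winning strategy from any (w, v). -/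
/-- The two vertices `u₀` and `u₁`. -/
inductive V11 : Type | u0 | u1

/-- The one-player arena on the two-clique with self-loops, colored by `0` and `1`. -/
def O11 : Arena V11 (Fin 2) :=
  ⟨Set.univ, ∅, Set.univ, fun v => match v with | V11.u0 => 0 | V11.u1 => 1⟩

/-- Ultimately periodic sequences. -/
def UltPeriodic {C : Type} (ρ : ℕ → C) : Prop :=
  ∃ (N p : ℕ), 1 ≤ p ∧ ∀ n ≥ N, ρ (n + p) = ρ n

/-- The winning condition: sequences that are not ultimately periodic. -/
def W11 : Set (ℕ → Fin 2) := {ρ | ¬ UltPeriodic ρ}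

/-! ### Auxiliary material -/

instance : DecidableEq V11
  | .u0, .u0 => isTrue rfl
  | .u0, .u1 => isFalse (fun h => V11.noConfusion h)
  | .u1, .u0 => isFalse (fun h => V11.noConfusion h)
  | .u1, .u1 => isTrue rfl

instance : Fintype V11 :=
  Fintype.ofSurjective (fun b : Bool => if b then V11.u1 else V11.u0)
    (by intro x; cases x; exacts [⟨false, rfl⟩, ⟨true, rfl⟩])

open Classical in
/-- the indicator of perfect squares, a non-ultimately-periodic sequence -/
noncomputable def rho : ℕ → Fin 2 := fun n => if ∃ m, m * m = n then 1 else 0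

lemma rho_nonUP : ¬ UltPeriodic rho := by
  rintro ⟨N, p, hp, h⟩
  set m := N + p with hm
  have hmm : m ≤ m * m := Nat.le_mul_of_pos_left m (by omega)
  have h1 : rho (m * m) = 1 := by rw [rho]; exact if_pos ⟨m, rfl⟩
  have h2 : rho (m * m + p) = 1 := by rw [h (m * m) (by omega)]; exact h1
  have hex : ∃ k, k * k = m * m + p := by
    by_contra hne
    rw [rho, if_neg hne] at h2
    exact absurd h2 (by decide)
  obtain ⟨k, hk⟩ := hex
  have hmk : m < k := by
    by_contra hle
    push_neg at hle
    have := Nat.mul_le_mul hle hle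
    omega
  have h3 : (m + 1) * (m + 1) ≤ k * k := Nat.mul_le_mul hmk hmk
  have h4 : (m + 1) * (m + 1) = m * m + 2 * m + 1 := by ring
  have hpm : p ≤ m := by omega
  linarith [h3, h4, hk, hpm, hp]

lemma combine_eq (σ1 σ2 : List (Fin 2) → V11 → V11) : O11.combine σ1 σ2 = σ1 := by
  funext w v
  simp [Arena.combine, O11]

lemma stepSeq_len (σ : List (Fin 2) → V11 → V11) (w : List (Fin 2)) (v : V11) (k : ℕ) :
    (O11.stepSeq σ w v k).1.length = w.length + k := by
  induction k with
  | zero => rfl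
  | succ k ih => simp [Arena.stepSeq, ih]; omega

lemma play_ge (σ : List (Fin 2) → V11 → V11) (w : List (Fin 2)) (v : V11) (i : ℕ)
    (h : w.length ≤ i) :
    O11.play σ w v i = O11.Γ (O11.stepSeq σ w v (i - w.length)).2 := by
  rw [Arena.play, dif_neg (by omega)]

/-- the target vertex realizing a given color -/
def vtx : Fin 2 → V11 := fun c => if c = 0 then V11.u0 else V11.u1

lemma gamma_vtx (c : Fin 2) : O11.Γ (vtx c) = c := by
  fin_cases c <;> rfl

/-- `W11` is prefix-independent, Player 1 wins from every `(w, v)`,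
but has no finite-memory winning strategy from any `(w, v)`. -/
theorem stmt11 :
    (∀ (c : Fin 2) (ρ : ℕ → Fin 2), consSeq c ρ ∈ W11 ↔ ρ ∈ W11) ∧
    (∀ (w : List (Fin 2)) (v : V11), O11.Wins1From W11 w v) ∧
    (∀ (w : List (Fin 2)) (v : V11),
      ¬ ∃ σ1, O11.Valid1 σ1 ∧ Arena.IsFM O11.V1 σ1 ∧ O11.Winning1 W11 σ1 w v) := by
  refine ⟨?_, ?_, ?_⟩
  · -- prefix independence
    intro c ρ
    simp only [W11, Set.mem_setOf_eq, not_iff_not]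
    constructor
    · rintro ⟨N, p, hp, h⟩
      refine ⟨N, p, hp, fun n hn => ?_⟩
      have h' := h (n + 1) (by omega)
      rw [show n + 1 + p = (n + p) + 1 from by omega] at h'
      exact h'
    · rintro ⟨N, p, hp, h⟩
      refine ⟨N + 1, p, hp, fun n hn => ?_⟩
      obtain ⟨n', rfl⟩ : ∃ n', n = n' + 1 := ⟨n - 1, by omega⟩
      rw [show n' + 1 + p = (n' + p) + 1 from by omega]
      exact h n' (by omega)
  · -- Player 1 wins from everywhere
    intro w v
    refine ⟨fun w' _ => vtx (rho (w'.length + 1)), fun w' v' _ => trivial, ?_⟩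
    intro σ2 _
    rw [combine_eq]
    set σ : List (Fin 2) → V11 → V11 := fun w' _ => vtx (rho (w'.length + 1)) with hσ
    have key : ∀ k, O11.play σ w v (w.length + k + 1) = rho (w.length + k + 1) := by
      intro k
      rw [play_ge σ w v _ (by omega)]
      have : w.length + k + 1 - w.length = k + 1 := by omega
      rw [this]
      show O11.Γ (σ (O11.stepSeq σ w v k).1 (O11.stepSeq σ w v k).2) = _
      rw [hσ]
      simp only [stepSeq_len]
      exact gamma_vtx _
    rintro ⟨N, p, hp, h⟩
    apply rho_nonUP
    refine ⟨w.length + N + 1, p, hp, fun n hn => ?_⟩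
    obtain ⟨k, rfl⟩ : ∃ k, n = w.length + k + 1 := ⟨n - w.length - 1, by omega⟩
    have e1 : w.length + k + 1 + p = w.length + (k + p) + 1 := by omega
    rw [e1, ← key (k + p), ← key k, ← e1]
    exact h _ (by omega)
  · -- no finite-memory winning strategy
    intro w v
    rintro ⟨σ1, _, ⟨M, instM, m0, αu, αn, hFM⟩, hwin⟩
    have hσ : ∀ (w' : List (Fin 2)) (v' : V11), σ1 w' v' = αn (w'.foldl αu m0) v' :=
      fun w' v' => hFM w' v' trivial
    have hplay : O11.play (O11.combine σ1 (fun _ u => u)) w v ∈ W11 :=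
      hwin (fun _ u => u) (fun w' v' hv' => absurd hv' (by simp [O11]))
    rw [combine_eq] at hplay
    apply hplay
    -- the state/vertex pair evolves by iteration of a function on a finite type
    set f : M × V11 → M × V11 := fun p => (αu p.1 (O11.Γ p.2), αn p.1 p.2) with hf
    set x0 : M × V11 := (w.foldl αu m0, v) with hx0
    have key : ∀ k, (List.foldl αu m0 (O11.stepSeq σ1 w v k).1,
        (O11.stepSeq σ1 w v k).2) = f^[k] x0 := by
      intro k
      induction k with
      | zero => rfl
      | succ k ih =>
        rw [Function.iterate_succ_apply', ← ih]
        show (List.foldl αu m0 ((O11.stepSeq σ1 w v k).1 ++ [O11.Γ (O11.stepSeq σ1 w v k).2]),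
          σ1 (O11.stepSeq σ1 w v k).1 (O11.stepSeq σ1 w v k).2) = _
        rw [hσ, List.foldl_append]
        rfl
    obtain ⟨i, j, hne, heq⟩ := Finite.exists_ne_map_eq_of_infinite (fun k => f^[k] x0)
    wlog hij : i < j generalizing i j
    · exact this j i hne.symm heq.symm (by omega)
    have hper : ∀ n ≥ i, f^[n + (j - i)] x0 = f^[n] x0 := by
      intro n hn
      have e1 : n + (j - i) = (n - i) + j := by omega
      have e2 : n = (n - i) + i := by omega
      rw [e1, Function.iterate_add_apply, ← heq, ← Function.iterate_add_apply, ← e2]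
    refine ⟨w.length + i, j - i, by omega, fun n hn => ?_⟩
    obtain ⟨k, rfl⟩ : ∃ k, n = w.length + k := ⟨n - w.length, by omega⟩
    have hk : i ≤ k := by omega
    rw [play_ge _ _ _ _ (by omega), play_ge _ _ _ _ (by omega)]
    have e1 : w.length + k + (j - i) - w.length = k + (j - i) := by omega
    have e2 : w.length + k - w.length = k := by omega
    rw [e1, e2]
    have h1 := key (k + (j - i))
    have h2 := key k
    have : (O11.stepSeq σ1 w v (k + (j - i))).2 = (O11.stepSeq σ1 w v k).2 := by
      have := congrArg Prod.snd (h1.trans ((hper k hk).trans h2.symm))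
      exact this
    rw [this]
end
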